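/- arXiv:2401.05368 — 5 statements merged into one kernel-verified Lean document; each statement's English description precedes it below -/
import Mathlib

section
/- Let n ≥ 2 and let X_1, …, X_n be i.i.d. random variables uniformly distributed on [0,1]. For each 1 ≤ k ≤ n, the covariance of X_k and its final rank R_k = ∑_{j=1}^n 1{X_j ≤ X_k} equals (n−1)/12. -/
open MeasureTheory ProbabilityTheory Set


lemma unif_prob : IsProbabilityMeasure (volume.restrict (Set.Icc (0:ℝ) 1)) :=
  ⟨by simp [Real.volume_Icc]⟩

lemma unif_int_id : ∫ x in Set.Icc (0:ℝ) 1, x = 1/2 := by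
  rw [MeasureTheory.integral_Icc_eq_integral_Ioc,
    ← intervalIntegral.integral_of_le (zero_le_one)]
  rw [integral_id]; norm_num

lemma unif_int_sq : ∫ x in Set.Icc (0:ℝ) 1, x * x = 1/3 := by
  have : ∀ x : ℝ, x * x = x ^ 2 := fun x => (sq x).symm
  simp_rw [this]
  rw [MeasureTheory.integral_Icc_eq_integral_Ioc,
    ← intervalIntegral.integral_of_le (zero_le_one)]
  simp [integral_pow]
  norm_num

lemma unif_inner (x : ℝ) (hx : x ∈ Set.Icc (0:ℝ) 1) :
    ∫ y in Set.Icc (0:ℝ) 1, (if y ≤ x then (1:ℝ) else 0) = x := by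
  have h : (fun y : ℝ => if y ≤ x then (1:ℝ) else 0)
      = (Set.Iic x).indicator (fun _ => (1:ℝ)) := by
    ext y; by_cases h : y ≤ x <;> simp [h]
  rw [h, integral_indicator_const _ measurableSet_Iic]
  rw [measureReal_def, Measure.restrict_apply measurableSet_Iic]
  have : Set.Iic x ∩ Set.Icc (0:ℝ) 1 = Set.Icc 0 x := by
    ext y
    constructor
    · rintro ⟨h1, h2, h3⟩; exact ⟨h2, h1⟩
    · rintro ⟨h1, h2⟩; exact ⟨h2, h1, h2.trans hx.2⟩
  rw [this, Real.volume_Icc]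
  simp [ENNReal.toReal_ofReal hx.1]

/-- For `n ≥ 2` i.i.d. uniform-`[0,1]` random variables `X 0, …, X (n-1)`,
the covariance of `X k` and its final rank `R k = ∑ j, 1{X j ≤ X k}` equals `(n-1)/12`. -/
theorem covariance_value_and_rank
    {Ω : Type*} [MeasurableSpace Ω] (P : Measure Ω) [IsProbabilityMeasure P]
    (n : ℕ) (hn : 2 ≤ n) (X : Fin n → Ω → ℝ)
    (hmeas : ∀ i, Measurable (X i))
    (hindep : iIndepFun X P)
    (hunif : ∀ i, Measure.map (X i) P = volume.restrict (Set.Icc (0 : ℝ) 1))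
    (k : Fin n) (R : Ω → ℝ)
    (hR : R = fun ω => ∑ j, if X j ω ≤ X k ω then (1 : ℝ) else 0) :
    ∫ ω, (X k ω - ∫ x, X k x ∂P) * (R ω - ∫ x, R x ∂P) ∂P = ((n : ℝ) - 1) / 12 := by
  set μ : Measure ℝ := volume.restrict (Set.Icc (0:ℝ) 1) with hμ
  haveI : IsProbabilityMeasure μ := unif_prob
  -- integrability of X i
  have hXint : ∀ i, Integrable (X i) P := by
    intro i
    have h1 : Integrable (fun x : ℝ => x) μ :=
      (continuous_id.integrableOn_Icc : IntegrableOn id (Set.Icc (0:ℝ) 1) volume)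
    have := (integrable_map_measure (f := X i) (g := fun x : ℝ => x)
      aestronglyMeasurable_id (hmeas i).aemeasurable).mp (by rwa [hunif i])
    exact this
  -- the sets
  set S : Fin n → Set Ω := fun j => {ω | X j ω ≤ X k ω} with hS
  have hSm : ∀ j, MeasurableSet (S j) := fun j => measurableSet_le (hmeas j) (hmeas k)
  have hite : ∀ j, (fun ω => if X j ω ≤ X k ω then (1:ℝ) else 0)
      = (S j).indicator (fun _ => (1:ℝ)) := by
    intro j; ext ω; by_cases h : X j ω ≤ X k ω <;> simp [hS, h]
  have hxite : ∀ j, (fun ω => X k ω * (if X j ω ≤ X k ω then (1:ℝ) else 0))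
      = (S j).indicator (X k) := by
    intro j; ext ω; by_cases h : X j ω ≤ X k ω <;> simp [hS, h]
  have hIint : ∀ j, Integrable ((S j).indicator (fun _ => (1:ℝ))) P :=
    fun j => (integrable_const (1:ℝ)).indicator (hSm j)
  have hXIint : ∀ j, Integrable ((S j).indicator (X k)) P :=
    fun j => (hXint k).indicator (hSm j)
  have hRint : Integrable R P := by
    rw [hR]; simp_rw [show ∀ (j : Fin n) (ω : Ω), (if X j ω ≤ X k ω then (1:ℝ) else 0)
      = (S j).indicator (fun _ => (1:ℝ)) ω from fun j ω => congrFun (hite j) ω]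
    exact integrable_finset_sum _ (fun j _ => hIint j)
  have hXR : (fun ω => X k ω * R ω) = fun ω => ∑ j, (S j).indicator (X k) ω := by
    rw [hR]; ext ω
    rw [Finset.mul_sum]
    exact Finset.sum_congr rfl fun j _ => congrFun (hxite j) ω
  have hXRint : Integrable (fun ω => X k ω * R ω) P := by
    rw [hXR]; exact integrable_finset_sum _ (fun j _ => hXIint j)
  -- law of pair for j ≠ k
  have hpair : ∀ j, j ≠ k → P.map (fun ω => (X k ω, X j ω)) = μ.prod μ := by
    intro j hjk
    have hind2 : IndepFun (X k) (X j) P := hindep.indepFun (Ne.symm hjk)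
    rw [(indepFun_iff_map_prod_eq_prod_map_map (hmeas k).aemeasurable
      (hmeas j).aemeasurable).mp hind2, hunif k, hunif j]
  -- a.e. membership in the square
  have haesq : ∀ᵐ p : ℝ × ℝ ∂(μ.prod μ), p ∈ Set.Icc (0:ℝ) 1 ×ˢ Set.Icc (0:ℝ) 1 := by
    rw [hμ, Measure.prod_restrict]
    exact ae_restrict_mem (measurableSet_Icc.prod measurableSet_Icc)
  -- measurability & integrability on the square
  have hmeasle : MeasurableSet {p : ℝ × ℝ | p.2 ≤ p.1} :=
    measurableSet_le measurable_snd measurable_fst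
  have hf2m : Measurable (fun p : ℝ × ℝ => if p.2 ≤ p.1 then (1:ℝ) else 0) :=
    Measurable.ite hmeasle measurable_const measurable_const
  have hf3m : Measurable (fun p : ℝ × ℝ => p.1 * if p.2 ≤ p.1 then (1:ℝ) else 0) :=
    measurable_fst.mul hf2m
  have hf2int : Integrable (fun p : ℝ × ℝ => if p.2 ≤ p.1 then (1:ℝ) else 0) (μ.prod μ) := by
    refine (integrable_const (1:ℝ)).mono' hf2m.aestronglyMeasurable ?_
    filter_upwards with p
    by_cases h : p.2 ≤ p.1 <;> simp [h]
  have hf3int : Integrable (fun p : ℝ × ℝ => p.1 * if p.2 ≤ p.1 then (1:ℝ) else 0)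
      (μ.prod μ) := by
    refine (integrable_const (1:ℝ)).mono' hf3m.aestronglyMeasurable ?_
    filter_upwards [haesq] with p hp
    by_cases h : p.2 ≤ p.1
    · simp only [h, if_true, mul_one, Real.norm_eq_abs]
      exact abs_le.mpr ⟨by linarith [hp.1.1], hp.1.2⟩
    · simp [h]
  -- value of ∫ X k
  have ha : (∫ x, X k x ∂P) = 1/2 := by
    have : (∫ x, X k x ∂P) = ∫ x, (fun y : ℝ => y) x ∂(P.map (X k)) :=
      (integral_map (hmeas k).aemeasurable aestronglyMeasurable_id).symm
    rw [this, hunif k]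
    exact unif_int_id
  -- integrals of indicators, j ≠ k
  have hI2 : ∀ j, j ≠ k → ∫ ω, (S j).indicator (fun _ => (1:ℝ)) ω ∂P = 1/2 := by
    intro j hjk
    have hcomp : ∀ ω, (S j).indicator (fun _ => (1:ℝ)) ω
        = (fun p : ℝ × ℝ => if p.2 ≤ p.1 then (1:ℝ) else 0) (X k ω, X j ω) := by
      intro ω; by_cases h : X j ω ≤ X k ω <;> simp [hS, h]
    simp_rw [hcomp]
    rw [← integral_map ((hmeas k).prodMk (hmeas j)).aemeasurable
      hf2m.aestronglyMeasurable, hpair j hjk, integral_prod _ hf2int]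
    have h1 : ∫ x, (∫ y, (if y ≤ x then (1:ℝ) else 0) ∂μ) ∂μ = ∫ x, x ∂μ := by
      refine integral_congr_ae ?_
      filter_upwards [ae_restrict_mem measurableSet_Icc] with x hx
      exact unif_inner x hx
    rw [h1]
    exact unif_int_id
  have hI3 : ∀ j, j ≠ k → ∫ ω, (S j).indicator (X k) ω ∂P = 1/3 := by
    intro j hjk
    have hcomp : ∀ ω, (S j).indicator (X k) ω
        = (fun p : ℝ × ℝ => p.1 * if p.2 ≤ p.1 then (1:ℝ) else 0) (X k ω, X j ω) := by
      intro ω; by_cases h : X j ω ≤ X k ω <;> simp [hS, h]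
    simp_rw [hcomp]
    rw [← integral_map ((hmeas k).prodMk (hmeas j)).aemeasurable
      hf3m.aestronglyMeasurable, hpair j hjk, integral_prod _ hf3int]
    have h1 : ∫ x, (∫ y, x * (if y ≤ x then (1:ℝ) else 0) ∂μ) ∂μ = ∫ x, x * x ∂μ := by
      refine integral_congr_ae ?_
      filter_upwards [ae_restrict_mem measurableSet_Icc] with x hx
      rw [integral_const_mul, unif_inner x hx]
    rw [h1]
    exact unif_int_sq
  -- j = k values
  have hIk : ∫ ω, (S k).indicator (fun _ => (1:ℝ)) ω ∂P = 1 := by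
    have h : (S k).indicator (fun _ => (1:ℝ)) = fun _ => 1 := by
      ext ω; simp [hS]
    rw [h]; simp
  have hXIk : ∫ ω, (S k).indicator (X k) ω ∂P = 1/2 := by
    have h : (S k).indicator (X k) = X k := by
      ext ω; simp [hS]
    rw [h]; exact ha
  -- value of ∫ R
  have hb : (∫ x, R x ∂P) = (n:ℝ)/2 + 1/2 := by
    rw [hR]
    have hre : (fun ω => ∑ j : Fin n, if X j ω ≤ X k ω then (1:ℝ) else 0)
        = fun ω => ∑ j : Fin n, (S j).indicator (fun _ => (1:ℝ)) ω := by
      ext ω; exact Finset.sum_congr rfl fun j _ => congrFun (hite j) ω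
    rw [hre, integral_finset_sum _ (fun j _ => hIint j)]
    have hval : ∀ j : Fin n, ∫ ω, (S j).indicator (fun _ => (1:ℝ)) ω ∂P
        = 1/2 + if j = k then 1/2 else 0 := by
      intro j; by_cases h : j = k
      · subst h; rw [hIk]; norm_num
      · rw [hI2 j h]; simp [h]
    rw [Finset.sum_congr rfl (fun j _ => hval j), Finset.sum_add_distrib,
      Finset.sum_const, Finset.sum_ite_eq' Finset.univ k (fun _ => (1/2:ℝ))]
    simp
    ring
  -- value of ∫ X k * R
  have hc : (∫ ω, X k ω * R ω ∂P) = (n:ℝ)/3 + 1/6 := by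
    rw [hXR, integral_finset_sum _ (fun j _ => hXIint j)]
    have hval : ∀ j : Fin n, ∫ ω, (S j).indicator (X k) ω ∂P
        = 1/3 + if j = k then 1/6 else 0 := by
      intro j; by_cases h : j = k
      · subst h; rw [hXIk]; norm_num
      · rw [hI3 j h]; simp [h]
    rw [Finset.sum_congr rfl (fun j _ => hval j), Finset.sum_add_distrib,
      Finset.sum_const, Finset.sum_ite_eq' Finset.univ k (fun _ => (1/6:ℝ))]
    simp
    ring
  -- expand the covariance
  have key : ∀ c d : ℝ, ∫ ω, (X k ω - c) * (R ω - d) ∂P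
      = (∫ ω, X k ω * R ω ∂P) - (c * (∫ ω, R ω ∂P) + (d * (∫ ω, X k ω ∂P) - c * d)) := by
    intro c d
    have h1 : Integrable (fun ω => c * R ω) P := hRint.const_mul c
    have h2 : Integrable (fun ω => d * X k ω) P := (hXint k).const_mul d
    have hfun : (fun ω => (X k ω - c) * (R ω - d))
        = fun ω => X k ω * R ω - (c * R ω + (d * X k ω - c * d)) := by
      ext ω; ring
    have h3 : Integrable (fun ω => d * X k ω - c * d) P := h2.sub (integrable_const _)
    have e1 : ∫ ω, (X k ω * R ω - (c * R ω + (d * X k ω - c * d))) ∂P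
        = (∫ ω, X k ω * R ω ∂P) - ∫ ω, (c * R ω + (d * X k ω - c * d)) ∂P :=
      integral_sub hXRint (h1.add h3)
    have e2 : ∫ ω, (c * R ω + (d * X k ω - c * d)) ∂P
        = (∫ ω, c * R ω ∂P) + ∫ ω, (d * X k ω - c * d) ∂P := integral_add h1 h3
    have e3 : ∫ ω, (d * X k ω - c * d) ∂P
        = (∫ ω, d * X k ω ∂P) - ∫ ω, (c * d : ℝ) ∂P := integral_sub h2 (integrable_const _)
    rw [hfun, e1, e2, e3, integral_const_mul, integral_const_mul, integral_const]
    simp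
  rw [ha, hb, key, hc, ha, hb]
  field_simp
  ring
end

section
/- Let n ≥ 2 and let X_1, …, X_n be i.i.d. random variables uniformly distributed on [0,1]. For every 1 ≤ k ≤ n, the correlation coefficient of X_k and its final rank R_k = ∑_{j=1}^n 1{X_j ≤ X_k} equals √((n−1)/(n+1)); in particular this correlation tends to 1 as n → ∞. -/
open MeasureTheory ProbabilityTheory Filter

section Aux

/-- The uniform measure on `[0,1]`. -/
noncomputable def unifCVR : Measure ℝ := volume.restrict (Set.Icc (0:ℝ) 1)

instance : IsProbabilityMeasure unifCVR := by
  constructor; rw [unifCVR, Measure.restrict_apply_univ, Real.volume_Icc]; norm_num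

lemma unifCVR_ae_mem : ∀ᵐ x ∂unifCVR, x ∈ Set.Icc (0:ℝ) 1 :=
  ae_restrict_mem measurableSet_Icc

lemma unifCVR_int_pow (m : ℕ) : ∫ x, x ^ m ∂unifCVR = 1 / (m + 1) := by
  rw [unifCVR, integral_Icc_eq_integral_Ioc,
    ← intervalIntegral.integral_of_le (by norm_num : (0:ℝ) ≤ 1), integral_pow]
  simp

lemma unifCVR_int_id : ∫ x, x ∂unifCVR = 1 / 2 := by
  have h := unifCVR_int_pow 1
  norm_num at h
  simpa using h

lemma unifCVR_int_sq : ∫ x, x ^ 2 ∂unifCVR = 1 / 3 := by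
  have h := unifCVR_int_pow 2
  norm_num at h
  exact h

lemma unifCVR_int_ind {y : ℝ} (hy : y ∈ Set.Icc (0:ℝ) 1) :
    ∫ x, (if x ≤ y then (1:ℝ) else 0) ∂unifCVR = y := by
  have h : (fun x => if x ≤ y then (1:ℝ) else 0) = Set.indicator (Set.Iic y) (fun _ => 1) := by
    ext x; simp [Set.indicator_apply]
  rw [h, integral_indicator_const _ measurableSet_Iic]
  rw [unifCVR, measureReal_def, Measure.restrict_apply measurableSet_Iic]
  have h2 : Set.Iic y ∩ Set.Icc 0 1 = Set.Icc 0 y := by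
    ext x; simp only [Set.mem_inter_iff, Set.mem_Iic, Set.mem_Icc]
    exact ⟨fun ⟨h1, h2, _⟩ => ⟨h2, h1⟩, fun ⟨h1, h2⟩ => ⟨h2, h1, h2.trans hy.2⟩⟩
  rw [h2, Real.volume_Icc, sub_zero, ENNReal.toReal_ofReal hy.1, smul_eq_mul, mul_one]

lemma measCVR_ind : Measurable (fun p : ℝ × ℝ => if p.2 ≤ p.1 then (1:ℝ) else 0) :=
  Measurable.ite (measurableSet_le measurable_snd measurable_fst) measurable_const
    measurable_const

lemma integrable_bddCVR {α : Type*} [MeasurableSpace α] {μ : Measure α} [IsFiniteMeasure μ]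
    {f : α → ℝ} (hf : AEStronglyMeasurable f μ) {C : ℝ} (h : ∀ᵐ x ∂μ, |f x| ≤ C) :
    Integrable f μ :=
  Integrable.mono' (integrable_const C) hf (by simpa using h)

lemma prodCVR_ae_mem :
    ∀ᵐ p ∂(unifCVR.prod unifCVR), p.1 ∈ Set.Icc (0:ℝ) 1 ∧ p.2 ∈ Set.Icc (0:ℝ) 1 := by
  have h : unifCVR.prod unifCVR
      = (volume.prod volume).restrict ((Set.Icc (0:ℝ) 1) ×ˢ (Set.Icc (0:ℝ) 1)) := by
    rw [unifCVR, Measure.prod_restrict]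
  rw [h]
  filter_upwards [ae_restrict_mem (measurableSet_Icc.prod measurableSet_Icc)] with p hp
  exact hp

lemma pairCVR_int (g : ℝ → ℝ) (hg : Measurable g) (hgb : ∀ x ∈ Set.Icc (0:ℝ) 1, |g x| ≤ 1) :
    ∫ p, g p.1 * (if p.2 ≤ p.1 then (1:ℝ) else 0) ∂(unifCVR.prod unifCVR)
      = ∫ x, g x * x ∂unifCVR := by
  have hmeas : Measurable (fun p : ℝ × ℝ => g p.1 * (if p.2 ≤ p.1 then (1:ℝ) else 0)) :=
    (hg.comp measurable_fst).mul measCVR_ind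
  have hint : Integrable (fun p : ℝ × ℝ => g p.1 * (if p.2 ≤ p.1 then (1:ℝ) else 0))
      (unifCVR.prod unifCVR) := by
    refine integrable_bddCVR hmeas.aestronglyMeasurable (C := 1) ?_
    filter_upwards [prodCVR_ae_mem] with p hp
    rw [abs_mul]
    calc |g p.1| * |if p.2 ≤ p.1 then (1:ℝ) else 0| ≤ 1 * 1 := by
          apply mul_le_mul (hgb _ hp.1) ?_ (abs_nonneg _) zero_le_one
          split <;> simp
      _ = 1 := by ring
  rw [MeasureTheory.integral_prod _ hint]
  refine integral_congr_ae ?_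
  filter_upwards [unifCVR_ae_mem] with x hx
  rw [integral_const_mul, unifCVR_int_ind hx]

lemma pairCVR_A :
    ∫ p, (if p.2 ≤ p.1 then (1:ℝ) else 0) ∂(unifCVR.prod unifCVR) = 1/2 := by
  have h := pairCVR_int (fun _ => 1) measurable_const (by intro x _; norm_num)
  simp only [one_mul] at h
  rw [h, unifCVR_int_id]

lemma pairCVR_B :
    ∫ p, p.1 * (if p.2 ≤ p.1 then (1:ℝ) else 0) ∂(unifCVR.prod unifCVR) = 1/3 := by
  have h := pairCVR_int id measurable_id (by
    intro x hx
    simp only [id]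
    rw [abs_le]; exact ⟨by linarith [hx.1], hx.2⟩)
  simp only [id] at h
  rw [h, show (fun x : ℝ => x * x) = fun x : ℝ => x ^ 2 from funext fun x => (sq x).symm,
    unifCVR_int_sq]

lemma tripleCVR :
    ∫ q, (if q.2.1 ≤ q.1 then (1:ℝ) else 0) * (if q.2.2 ≤ q.1 then (1:ℝ) else 0)
      ∂(unifCVR.prod (unifCVR.prod unifCVR)) = 1/3 := by
  have hmeas : Measurable (fun q : ℝ × ℝ × ℝ =>
      (if q.2.1 ≤ q.1 then (1:ℝ) else 0) * (if q.2.2 ≤ q.1 then (1:ℝ) else 0)) := by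
    apply Measurable.mul <;> apply Measurable.ite _ measurable_const measurable_const
    · exact measurableSet_le (measurable_fst.comp measurable_snd) measurable_fst
    · exact measurableSet_le (measurable_snd.comp measurable_snd) measurable_fst
  have hint : Integrable (fun q : ℝ × ℝ × ℝ =>
      (if q.2.1 ≤ q.1 then (1:ℝ) else 0) * (if q.2.2 ≤ q.1 then (1:ℝ) else 0))
      (unifCVR.prod (unifCVR.prod unifCVR)) := by
    apply Integrable.mono' (integrable_const (1:ℝ)) hmeas.aestronglyMeasurable
    refine Eventually.of_forall fun q => ?_
    have h : ∀ a b : Prop, ∀ [Decidable a] [Decidable b],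
        |(if a then (1:ℝ) else 0) * (if b then (1:ℝ) else 0)| ≤ 1 := by
      intro a b _ _; split <;> split <;> norm_num
    exact h _ _
  rw [MeasureTheory.integral_prod _ hint]
  have key : ∀ᵐ z ∂unifCVR, (∫ p : ℝ × ℝ,
      (if p.1 ≤ z then (1:ℝ) else 0) * (if p.2 ≤ z then (1:ℝ) else 0)
      ∂(unifCVR.prod unifCVR)) = z ^ 2 := by
    filter_upwards [unifCVR_ae_mem] with z hz
    rw [integral_prod_mul (L := ℝ) (fun x => if x ≤ z then (1:ℝ) else 0)
      (fun y => if y ≤ z then (1:ℝ) else 0), unifCVR_int_ind hz, sq]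
  rw [integral_congr_ae key, unifCVR_int_sq]

end Aux

/-- For `n ≥ 2` i.i.d. uniform-`[0,1]` random variables, the correlation
coefficient of `X k` and its final rank `R k = ∑ j, 1{X j ≤ X k}` equals `√((n-1)/(n+1))`;
in particular this correlation tends to `1` as `n → ∞`. -/
theorem correlation_value_and_rank
    {Ω : Type*} [MeasurableSpace Ω] (P : Measure Ω) [IsProbabilityMeasure P]
    (n : ℕ) (hn : 2 ≤ n) (X : Fin n → Ω → ℝ)
    (hmeas : ∀ i, Measurable (X i))
    (hindep : iIndepFun X P)
    (hunif : ∀ i, Measure.map (X i) P = volume.restrict (Set.Icc (0 : ℝ) 1))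
    (k : Fin n) (R : Ω → ℝ)
    (hR : R = fun ω => ∑ j, if X j ω ≤ X k ω then (1 : ℝ) else 0) :
    (∫ ω, (X k ω - ∫ x, X k x ∂P) * (R ω - ∫ x, R x ∂P) ∂P) /
        (Real.sqrt (variance (X k) P) * Real.sqrt (variance R P))
      = Real.sqrt (((n : ℝ) - 1) / ((n : ℝ) + 1)) ∧
    Tendsto (fun m : ℕ => Real.sqrt (((m : ℝ) - 1) / ((m : ℝ) + 1))) atTop (nhds 1) := by
  classical
  have hnR : (2:ℝ) ≤ (n:ℝ) := by exact_mod_cast hn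
  -- Part 2: the limit
  have htend : Tendsto (fun m : ℕ => Real.sqrt (((m : ℝ) - 1) / ((m : ℝ) + 1))) atTop (nhds 1) := by
    have h2 : Tendsto (fun m : ℕ => ((m:ℝ) + 1)) atTop atTop :=
      tendsto_atTop_add_const_right _ 1 tendsto_natCast_atTop_atTop
    have h3 : Tendsto (fun m : ℕ => 2 / ((m:ℝ) + 1)) atTop (nhds 0) := by
      have := h2.inv_tendsto_atTop
      have h4 := this.const_mul (2:ℝ)
      simpa [div_eq_mul_inv] using h4
    have h4 : Tendsto (fun m : ℕ => 1 - 2 / ((m:ℝ) + 1)) atTop (nhds (1 - 0)) :=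
      tendsto_const_nhds.sub h3
    rw [sub_zero] at h4
    have h1 : Tendsto (fun m : ℕ => ((m : ℝ) - 1) / ((m : ℝ) + 1)) atTop (nhds 1) := by
      refine h4.congr fun m => ?_
      have hm : ((m:ℝ) + 1) ≠ 0 := by positivity
      field_simp
      ring
    have h5 := (Real.continuous_sqrt.tendsto 1).comp h1
    simpa [Function.comp_def] using h5
  refine ⟨?_, htend⟩
  -- indicators
  set I : Fin n → Ω → ℝ := fun j ω => if X j ω ≤ X k ω then 1 else 0 with hI
  have hImeas : ∀ j, Measurable (I j) := fun j =>
    Measurable.ite (measurableSet_le (hmeas j) (hmeas k)) measurable_const measurable_const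
  have hIabs : ∀ j ω, |I j ω| ≤ 1 := by
    intro j ω; simp only [hI]; split <;> norm_num
  have hIint : ∀ j, Integrable (I j) P := fun j =>
    integrable_bddCVR (hImeas j).aestronglyMeasurable (Eventually.of_forall (hIabs j))
  have hIk : ∀ ω, I k ω = 1 := fun ω => if_pos le_rfl
  have hIsq : ∀ j ω, I j ω * I j ω = I j ω := by
    intro j ω; simp only [hI]; split <;> norm_num
  have hRmeas : Measurable R := by
    rw [hR]; exact Finset.measurable_sum _ fun j _ => hImeas j
  have hRabs : ∀ ω, |R ω| ≤ n := by
    intro ω; rw [hR]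
    calc |∑ j, I j ω| ≤ ∑ j, |I j ω| := Finset.abs_sum_le_sum_abs _ _
      _ ≤ ∑ _j : Fin n, (1:ℝ) := Finset.sum_le_sum fun j _ => hIabs j ω
      _ = n := by simp
  have hRint : Integrable R P :=
    integrable_bddCVR hRmeas.aestronglyMeasurable (Eventually.of_forall hRabs)
  have hXae : ∀ᵐ ω ∂P, X k ω ∈ Set.Icc (0:ℝ) 1 := by
    apply (ae_map_iff (hmeas k).aemeasurable measurableSet_Icc).1
    rw [hunif k]; exact unifCVR_ae_mem
  have hXabs : ∀ᵐ ω ∂P, |X k ω| ≤ 1 := by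
    filter_upwards [hXae] with ω hω
    rw [abs_le]; exact ⟨by linarith [hω.1], hω.2⟩
  have hXint : Integrable (X k) P := integrable_bddCVR (hmeas k).aestronglyMeasurable hXabs
  -- first and second moments of X k
  have hEX : ∫ ω, X k ω ∂P = 1/2 := by
    have h := integral_map (μ := P) (φ := X k) (hmeas k).aemeasurable
      (f := fun x : ℝ => x) aestronglyMeasurable_id
    rw [hunif k] at h
    rw [← h]; exact unifCVR_int_id
  have hEX2 : ∫ ω, X k ω ^ 2 ∂P = 1/3 := by
    have h := integral_map (μ := P) (φ := X k) (hmeas k).aemeasurable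
      (f := fun x : ℝ => x ^ 2) (measurable_id.pow_const 2).aestronglyMeasurable
    rw [hunif k] at h
    rw [← h]; exact unifCVR_int_sq
  -- pair laws
  have hmapPair : ∀ j, j ≠ k →
      Measure.map (fun ω => (X k ω, X j ω)) P = unifCVR.prod unifCVR := by
    intro j hj
    rw [(indepFun_iff_map_prod_eq_prod_map_map (hmeas k).aemeasurable
      (hmeas j).aemeasurable).mp (hindep.indepFun (Ne.symm hj)), hunif k, hunif j, unifCVR]
  have hE1 : ∀ j, j ≠ k → ∫ ω, I j ω ∂P = 1/2 := by
    intro j hj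
    calc ∫ ω, I j ω ∂P
        = ∫ p, (if p.2 ≤ p.1 then (1:ℝ) else 0) ∂(unifCVR.prod unifCVR) := by
          rw [← hmapPair j hj]
          exact (integral_map ((hmeas k).prodMk (hmeas j)).aemeasurable
            measCVR_ind.aestronglyMeasurable).symm
      _ = 1/2 := pairCVR_A
  have hE2 : ∀ j, j ≠ k → ∫ ω, X k ω * I j ω ∂P = 1/3 := by
    intro j hj
    calc ∫ ω, X k ω * I j ω ∂P
        = ∫ p, p.1 * (if p.2 ≤ p.1 then (1:ℝ) else 0) ∂(unifCVR.prod unifCVR) := by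
          rw [← hmapPair j hj]
          exact (integral_map ((hmeas k).prodMk (hmeas j)).aemeasurable
            (measurable_fst.mul measCVR_ind).aestronglyMeasurable).symm
      _ = 1/3 := pairCVR_B
  have hmeasT : Measurable (fun q : ℝ × ℝ × ℝ =>
      (if q.2.1 ≤ q.1 then (1:ℝ) else 0) * (if q.2.2 ≤ q.1 then (1:ℝ) else 0)) := by
    apply Measurable.mul <;> apply Measurable.ite _ measurable_const measurable_const
    · exact measurableSet_le (measurable_fst.comp measurable_snd) measurable_fst
    · exact measurableSet_le (measurable_snd.comp measurable_snd) measurable_fst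
  have hE3 : ∀ i j, i ≠ j → i ≠ k → j ≠ k → ∫ ω, I i ω * I j ω ∂P = 1/3 := by
    intro i j hij hik hjk
    have hmapT : Measure.map (fun ω => (X k ω, (X i ω, X j ω))) P
        = unifCVR.prod (unifCVR.prod unifCVR) := by
      have h1 : IndepFun (X k) (fun ω => (X i ω, X j ω)) P :=
        (hindep.indepFun_prodMk hmeas i j k hik hjk).symm
      rw [(indepFun_iff_map_prod_eq_prod_map_map (hmeas k).aemeasurable
          ((hmeas i).prodMk (hmeas j)).aemeasurable).mp h1, hunif k,
        (indepFun_iff_map_prod_eq_prod_map_map (hmeas i).aemeasurable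
          (hmeas j).aemeasurable).mp (hindep.indepFun hij), hunif i, hunif j, unifCVR]
    calc ∫ ω, I i ω * I j ω ∂P
        = ∫ q, (if q.2.1 ≤ q.1 then (1:ℝ) else 0) * (if q.2.2 ≤ q.1 then (1:ℝ) else 0)
            ∂(unifCVR.prod (unifCVR.prod unifCVR)) := by
          rw [← hmapT]
          exact (integral_map ((hmeas k).prodMk
            ((hmeas i).prodMk (hmeas j))).aemeasurable hmeasT.aestronglyMeasurable).symm
      _ = 1/3 := tripleCVR
  -- cardinalities
  have hcard1 : ((Finset.univ.erase k).card : ℝ) = (n:ℝ) - 1 := by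
    rw [Finset.card_erase_of_mem (Finset.mem_univ k), Finset.card_univ, Fintype.card_fin,
      Nat.cast_sub (by omega)]
    norm_num
  have hsplit : ∀ (f : Fin n → ℝ),
      ∑ j, f j = f k + ∑ j ∈ Finset.univ.erase k, f j :=
    fun f => (Finset.add_sum_erase _ f (Finset.mem_univ k)).symm
  have hEIk : ∫ ω, I k ω ∂P = 1 := by
    simp only [hIk]
    simp
  -- E[R]
  have hER : ∫ ω, R ω ∂P = 1 + ((n:ℝ) - 1)/2 := by
    have hfun : R = fun ω => ∑ j, I j ω := hR
    rw [hfun, integral_finset_sum _ fun j _ => hIint j,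
      hsplit (fun j => ∫ ω, I j ω ∂P), hEIk,
      Finset.sum_congr rfl (fun j hj => hE1 j (Finset.ne_of_mem_erase hj)),
      Finset.sum_const, nsmul_eq_mul, hcard1]
    ring
  -- E[X R]
  have hXIint : ∀ j, Integrable (fun ω => X k ω * I j ω) P := fun j =>
    integrable_bddCVR ((hmeas k).mul (hImeas j)).aestronglyMeasurable (C := 1)
      (by filter_upwards [hXabs] with ω h
          rw [abs_mul]
          calc |X k ω| * |I j ω| ≤ 1 * 1 :=
                mul_le_mul h (hIabs j ω) (abs_nonneg _) zero_le_one
            _ = 1 := by norm_num)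
  have hEXR : ∫ ω, X k ω * R ω ∂P = 1/2 + ((n:ℝ) - 1)/3 := by
    have hfun : (fun ω => X k ω * R ω) = fun ω => ∑ j, X k ω * I j ω := by
      funext ω; rw [hR]; exact Finset.mul_sum _ _ _
    have hterm : ∫ ω, X k ω * I k ω ∂P = 1/2 := by
      have : (fun ω => X k ω * I k ω) = X k := by
        funext ω; rw [hIk, mul_one]
      rw [this]; exact hEX
    rw [hfun, integral_finset_sum _ fun j _ => hXIint j,
      hsplit (fun j => ∫ ω, X k ω * I j ω ∂P), hterm,
      Finset.sum_congr rfl (fun j hj => hE2 j (Finset.ne_of_mem_erase hj)),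
      Finset.sum_const, nsmul_eq_mul, hcard1]
    ring
  -- E[R²]
  have hIIint : ∀ i j, Integrable (fun ω => I i ω * I j ω) P := fun i j =>
    integrable_bddCVR ((hImeas i).mul (hImeas j)).aestronglyMeasurable (C := 1)
      (Eventually.of_forall fun ω => by
        rw [abs_mul]
        calc |I i ω| * |I j ω| ≤ 1 * 1 :=
              mul_le_mul (hIabs i ω) (hIabs j ω) (abs_nonneg _) zero_le_one
          _ = 1 := by norm_num)
  have hER2 : ∫ ω, R ω * R ω ∂P
      = (1 + ((n:ℝ)-1)/2) + ((n:ℝ)-1) * (1 + ((n:ℝ)-2)/3) := by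
    have hfun : (fun ω => R ω * R ω) = fun ω => ∑ i, ∑ j, I i ω * I j ω := by
      funext ω; rw [hR]; exact Finset.sum_mul_sum _ _ _ _
    rw [hfun, integral_finset_sum _ fun i _ =>
      integrable_finset_sum _ fun j _ => hIIint i j]
    have hinner : ∀ i, ∫ ω, ∑ j, I i ω * I j ω ∂P = ∑ j, ∫ ω, I i ω * I j ω ∂P :=
      fun i => integral_finset_sum _ fun j _ => hIIint i j
    rw [Finset.sum_congr rfl fun i _ => hinner i,
      hsplit (fun i => ∑ j, ∫ ω, I i ω * I j ω ∂P)]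
    -- row i = k
    have hrowk : ∑ j, ∫ ω, I k ω * I j ω ∂P = 1 + ((n:ℝ)-1)/2 := by
      have hckk : ∫ ω, I k ω * I k ω ∂P = 1 := by
        have : (fun ω => I k ω * I k ω) = I k := funext fun ω => hIsq k ω
        rw [this]; exact hEIk
      have hckj : ∀ j ∈ Finset.univ.erase k, ∫ ω, I k ω * I j ω ∂P = 1/2 := by
        intro j hj
        have : (fun ω => I k ω * I j ω) = I j := by
          funext ω; rw [hIk, one_mul]
        rw [this]; exact hE1 j (Finset.ne_of_mem_erase hj)
      rw [hsplit (fun j => ∫ ω, I k ω * I j ω ∂P), hckk,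
        Finset.sum_congr rfl hckj, Finset.sum_const, nsmul_eq_mul, hcard1]
      ring
    have hrow : ∀ i ∈ Finset.univ.erase k,
        (∑ j, ∫ ω, I i ω * I j ω ∂P) = 1 + ((n:ℝ)-2)/3 := by
      intro i hi
      have hik : i ≠ k := Finset.ne_of_mem_erase hi
      have hcik : ∫ ω, I i ω * I k ω ∂P = 1/2 := by
        have : (fun ω => I i ω * I k ω) = I i := by
          funext ω; rw [hIk, mul_one]
        rw [this]; exact hE1 i hik
      have hcii : ∫ ω, I i ω * I i ω ∂P = 1/2 := by
        have : (fun ω => I i ω * I i ω) = I i := funext fun ω => hIsq i ω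
        rw [this]; exact hE1 i hik
      have hoff : ∀ j ∈ (Finset.univ.erase k).erase i, ∫ ω, I i ω * I j ω ∂P = 1/3 := by
        intro j hj
        exact hE3 i j (Ne.symm (Finset.ne_of_mem_erase hj)) hik
          (Finset.ne_of_mem_erase (Finset.mem_of_mem_erase hj))
      have hcard2 : (((Finset.univ.erase k).erase i).card : ℝ) = (n:ℝ) - 2 := by
        rw [Finset.card_erase_of_mem hi, Finset.card_erase_of_mem (Finset.mem_univ k),
          Finset.card_univ, Fintype.card_fin, Nat.cast_sub (by omega)]
        push_cast [Nat.cast_sub (by omega : 1 ≤ n)]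
        ring
      rw [hsplit (fun j => ∫ ω, I i ω * I j ω ∂P), hcik,
        ← Finset.add_sum_erase _ _ hi, hcii,
        Finset.sum_congr rfl hoff, Finset.sum_const, nsmul_eq_mul, hcard2]
      ring
    rw [hrowk, Finset.sum_congr rfl hrow, Finset.sum_const, nsmul_eq_mul, hcard1]
  -- variances
  have hMemX : MemLp (X k) 2 P := MemLp.of_bound (hmeas k).aestronglyMeasurable 1
    (by filter_upwards [hXabs] with ω h; simpa [Real.norm_eq_abs] using h)
  have hMemR : MemLp R 2 P := MemLp.of_bound hRmeas.aestronglyMeasurable n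
    (Eventually.of_forall fun ω => by simpa [Real.norm_eq_abs] using hRabs ω)
  have hVarX : variance (X k) P = 1/12 := by
    rw [variance_eq_sub hMemX]
    have h2 : ∫ ω, (X k ^ 2) ω ∂P = 1/3 := by
      simp only [Pi.pow_apply]; exact hEX2
    rw [h2, hEX]
    norm_num
  have hVarR : variance R P = ((n:ℝ)-1) * ((n:ℝ)+1) / 12 := by
    rw [variance_eq_sub hMemR]
    have h2 : ∫ ω, (R ^ 2) ω ∂P = (1 + ((n:ℝ)-1)/2) + ((n:ℝ)-1) * (1 + ((n:ℝ)-2)/3) := by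
      have : (R ^ 2 : Ω → ℝ) = fun ω => R ω * R ω := by
        funext ω; simp [sq]
      rw [this]; exact hER2
    rw [h2, hER]
    ring
  -- covariance
  have hXRint : Integrable (fun ω => X k ω * R ω) P :=
    integrable_bddCVR ((hmeas k).mul hRmeas).aestronglyMeasurable (C := n)
      (by filter_upwards [hXabs] with ω h
          rw [abs_mul]
          calc |X k ω| * |R ω| ≤ 1 * n :=
                mul_le_mul h (hRabs ω) (abs_nonneg _) zero_le_one
            _ = n := one_mul _)
  have hcov : ∫ ω, (X k ω - 1/2) * (R ω - (1 + ((n:ℝ)-1)/2)) ∂P = ((n:ℝ)-1)/12 := by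
    have hexp : (fun ω => (X k ω - 1/2) * (R ω - (1 + ((n:ℝ)-1)/2)))
        = fun ω => X k ω * R ω - ((1/2) * R ω + ((1 + ((n:ℝ)-1)/2) * X k ω
            - (1/2) * (1 + ((n:ℝ)-1)/2))) := by
      funext ω; ring
    have i1 : Integrable (fun ω => (1/2 : ℝ) * R ω) P := hRint.const_mul _
    have i2 : Integrable (fun ω => (1 + ((n:ℝ)-1)/2) * X k ω) P := hXint.const_mul _
    have i3 : Integrable (fun _ : Ω => (1/2 : ℝ) * (1 + ((n:ℝ)-1)/2)) P := integrable_const _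
    have i23 : Integrable (fun ω => (1 + ((n:ℝ)-1)/2) * X k ω
        - (1/2) * (1 + ((n:ℝ)-1)/2)) P := i2.sub i3
    have i123 : Integrable (fun ω => (1/2 : ℝ) * R ω + ((1 + ((n:ℝ)-1)/2) * X k ω
        - (1/2) * (1 + ((n:ℝ)-1)/2))) P := i1.add i23
    rw [hexp, integral_sub hXRint i123, integral_add i1 i23, integral_sub i2 i3,
      integral_const_mul, integral_const_mul, integral_const, hEXR, hER, hEX]
    simp only [probReal_univ, measure_univ, ENNReal.toReal_one, smul_eq_mul, one_mul]
    ring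
  rw [hEX, hER] at *
  rw [hcov, hVarX, hVarR]
  -- final algebra with square roots
  have hp : (0:ℝ) < (n:ℝ) - 1 := by linarith
  have hq : (0:ℝ) < (n:ℝ) + 1 := by linarith
  have hsp : (0:ℝ) < Real.sqrt ((n:ℝ)-1) := Real.sqrt_pos.mpr hp
  have hsq : (0:ℝ) < Real.sqrt ((n:ℝ)+1) := Real.sqrt_pos.mpr hq
  have hd : Real.sqrt (1/12) * Real.sqrt (((n:ℝ)-1)*((n:ℝ)+1)/12)
      = (Real.sqrt ((n:ℝ)-1) * Real.sqrt ((n:ℝ)+1)) / 12 := by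
    rw [← Real.sqrt_mul (by norm_num : (0:ℝ) ≤ 1/12),
      show (1/12) * (((n:ℝ)-1)*((n:ℝ)+1)/12) = (((n:ℝ)-1)*((n:ℝ)+1)) * (1/12)^2 by ring,
      Real.sqrt_mul (by positivity) ((1/12)^2),
      Real.sqrt_sq (by norm_num : (0:ℝ) ≤ 1/12),
      Real.sqrt_mul hp.le]
    ring
  rw [hd, Real.sqrt_div hp.le]
  rw [div_eq_div_iff (by positivity) hsq.ne']
  have hmul : Real.sqrt ((n:ℝ)-1) * Real.sqrt ((n:ℝ)-1) = (n:ℝ)-1 :=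
    Real.mul_self_sqrt hp.le
  field_simp
  nlinarith [hmul, hsp, hsq, mul_pos hsp hsq]
end

section
/- The optimal value v_n of Robbins' problem is nondecreasing in n: for every n ≥ 1, v_n ≤ v_{n+1}. -/
set_option linter.unusedSectionVars false
set_option maxHeartbeats 1000000

open MeasureTheory ProbabilityTheory Filter

/-- The σ-algebra generated by the first `k` observations `X 0, …, X (k-1)`. -/
def obsFiltration {Ω : Type*} (X : ℕ → Ω → ℝ) (k : ℕ) : MeasurableSpace Ω :=
  ⨆ i ∈ Finset.range k, MeasurableSpace.comap (X i) inferInstance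

/-- `τ` is a stopping rule for horizon `n` (`0`-based: values in `{0, …, n-1}`):
the decision to stop at time `k` depends only on the first `k+1` observations. -/
def IsStoppingRule {Ω : Type*} (X : ℕ → Ω → ℝ) (n : ℕ) (τ : Ω → ℕ) : Prop :=
  (∀ ω, τ ω < n) ∧ ∀ k, MeasurableSet[obsFiltration X (k + 1)] {ω | τ ω = k}

/-- The final rank of the observation selected by `τ` among `X 0, …, X (n-1)`. -/
noncomputable def finalRank {Ω : Type*} (X : ℕ → Ω → ℝ) (n : ℕ) (τ : Ω → ℕ) (ω : Ω) : ℝ :=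
  ∑ j ∈ Finset.range n, if X j ω ≤ X (τ ω) ω then 1 else 0

/-- The value `v n` of Robbins' problem: the infimum of the expected final rank over all
stopping rules for horizon `n`. -/
noncomputable def robbinsValue {Ω : Type*} [MeasurableSpace Ω] (P : Measure Ω)
    (X : ℕ → Ω → ℝ) (n : ℕ) : ℝ :=
  sInf {r | ∃ τ, IsStoppingRule X n τ ∧ r = ∫ ω, finalRank X n τ ω ∂P}

namespace Robbins5

open Set
open scoped ENNReal

/-! ### The canonical space -/

/-- uniform measure on `[0,1]`. -/
noncomputable def unif : Measure ℝ := volume.restrict (Set.Icc (0:ℝ) 1)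

instance : IsProbabilityMeasure unif := ⟨by simp [unif, Real.volume_Icc]⟩

/-- product of `N` uniforms. -/
noncomputable def nu (N : ℕ) : Measure (Fin N → ℝ) := Measure.pi fun _ => unif

instance (N : ℕ) : IsProbabilityMeasure (nu N) := by unfold nu; infer_instance

/-- the first `N` observations as a random vector. -/
def vec {Ω : Type*} (X : ℕ → Ω → ℝ) (N : ℕ) (ω : Ω) : Fin N → ℝ := fun i => X i.val ω

lemma vec_measurable {Ω : Type*} [MeasurableSpace Ω] {X : ℕ → Ω → ℝ}
    (hmeas : ∀ i, Measurable (X i)) (N : ℕ) : Measurable (vec X N) :=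
  measurable_pi_lambda _ fun i => hmeas i.val

/-- value of `x` at a natural index, `0` out of range. -/
def valAt {N : ℕ} (x : Fin N → ℝ) (v : ℕ) : ℝ := ∑ k : Fin N, if v = k.val then x k else 0

lemma valAt_eq {N : ℕ} (x : Fin N → ℝ) {v : ℕ} (h : v < N) : valAt x v = x ⟨v, h⟩ := by
  classical
  rw [valAt, Finset.sum_eq_single_of_mem (⟨v, h⟩ : Fin N) (Finset.mem_univ _)]
  · simp
  · intro b _ hb
    have : v ≠ b.val := fun hv => hb (by ext; simp [← hv])
    simp [this]

lemma valAt_measurable {N : ℕ} {α : Type*} [MeasurableSpace α] {g : α → Fin N → ℝ}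
    (hg : Measurable g) {s : α → ℕ} (hs : Measurable s) :
    Measurable (fun a => valAt (g a) (s a)) := by
  unfold valAt
  refine Finset.measurable_sum _ fun k _ => Measurable.ite ?_ ((measurable_pi_apply k).comp hg)
    measurable_const
  exact hs (measurableSet_singleton k.val)

/-- canonical (ENNReal) rank of the selection of rule `s` among the `N` coordinates. -/
noncomputable def rk {N : ℕ} (s : (Fin N → ℝ) → ℕ) (x : Fin N → ℝ) : ℝ≥0∞ :=
  ∑ i : Fin N, if x i ≤ valAt x (s x) then 1 else 0

lemma rk_le {N : ℕ} (s : (Fin N → ℝ) → ℕ) (x : Fin N → ℝ) : rk s x ≤ N := by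
  calc rk s x ≤ ∑ _i : Fin N, (1:ℝ≥0∞) :=
        Finset.sum_le_sum (fun i _ => by split <;> simp)
    _ = N := by simp

lemma rk_measurable {N : ℕ} {s : (Fin N → ℝ) → ℕ} (hs : Measurable s) :
    Measurable (rk s) := by
  unfold rk
  refine Finset.measurable_sum _ fun i _ => Measurable.ite ?_ measurable_const measurable_const
  exact measurableSet_le (measurable_pi_apply i) (valAt_measurable measurable_id hs)

/-! ### Transfer between `Ω` and the canonical space -/

variable {Ω : Type*} [MeasurableSpace Ω] (P : Measure Ω) [IsProbabilityMeasure P]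
  (X : ℕ → Ω → ℝ)

/-- The joint law of the first `N` observations is the product of uniforms. -/
lemma map_vec (hmeas : ∀ i, Measurable (X i))
    (hindep : iIndepFun X P)
    (hunif : ∀ i, Measure.map (X i) P = volume.restrict (Set.Icc (0 : ℝ) 1)) (N : ℕ) :
    Measure.map (vec X N) P = nu N := by
  classical
  have hv := vec_measurable hmeas N
  symm
  unfold nu
  apply Measure.pi_eq
  intro s hs
  set s' : ℕ → Set ℝ := fun k => if h : k < N then s ⟨k, h⟩ else Set.univ with hs'def
  have hs'meas : ∀ k, MeasurableSet (s' k) := by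
    intro k
    simp only [hs'def]
    split
    · exact hs _
    · exact MeasurableSet.univ
  have hpre : (vec X N) ⁻¹' (Set.pi Set.univ s) = ⋂ i ∈ Finset.range N, (X i) ⁻¹' (s' i) := by
    ext ω
    simp only [Set.mem_preimage, Set.mem_pi, Set.mem_univ, true_implies, Set.mem_iInter,
      Finset.mem_range]
    constructor
    · intro h i hi
      simp only [hs'def, dif_pos hi]
      exact h ⟨i, hi⟩
    · intro h i
      have := h i.val i.isLt
      simp only [hs'def, dif_pos i.isLt] at this
      exact this
  rw [Measure.map_apply hv (MeasurableSet.univ_pi hs), hpre,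
    hindep.measure_inter_preimage_eq_mul (Finset.range N) (fun i _ => hs'meas i)]
  have hone : ∀ i, P (X i ⁻¹' s' i) = unif (s' i) := by
    intro i
    rw [← Measure.map_apply (hmeas i) (hs'meas i), hunif i]
    rfl
  calc (∏ i ∈ Finset.range N, P (X i ⁻¹' s' i)) = ∏ i ∈ Finset.range N, unif (s' i) := by
        exact Finset.prod_congr rfl fun i _ => hone i
    _ = ∏ i : Fin N, unif (s' i.val) := (Fin.prod_univ_eq_prod_range (fun k => unif (s' k)) N).symm
    _ = ∏ i : Fin N, unif (s i) := by
        refine Finset.prod_congr rfl fun i _ => ?_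
        simp only [hs'def, dif_pos i.isLt]

lemma obsFiltration_eq_comap (K : ℕ) :
    obsFiltration X K = MeasurableSpace.comap (vec X K) inferInstance := by
  have hpi : (inferInstance : MeasurableSpace (Fin K → ℝ)) =
      ⨆ a : Fin K, MeasurableSpace.comap (fun y : Fin K → ℝ => y a) inferInstance := rfl
  unfold obsFiltration
  apply le_antisymm
  · refine iSup₂_le fun i hi => ?_
    rw [Finset.mem_range] at hi
    have hXi : X i = (fun y : Fin K → ℝ => y ⟨i, hi⟩) ∘ (vec X K) := rfl
    rw [hXi, ← MeasurableSpace.comap_comp]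
    exact MeasurableSpace.comap_mono (le_iSup (fun a : Fin K =>
      MeasurableSpace.comap (fun y : Fin K → ℝ => y a) inferInstance) ⟨i, hi⟩)
  · rw [hpi, MeasurableSpace.comap_iSup]
    refine iSup_le fun a => ?_
    rw [MeasurableSpace.comap_comp]
    have : ((fun y : Fin K → ℝ => y a) ∘ (vec X K)) = X a.val := rfl
    rw [this]
    exact le_iSup₂ (f := fun (i : ℕ) (_ : i ∈ Finset.range K) =>
      MeasurableSpace.comap (X i) inferInstance) a.val (Finset.mem_range.mpr a.isLt)

lemma stoppingRule_measurable {n : ℕ} {τ : Ω → ℕ} (hmeas : ∀ i, Measurable (X i))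
    (hτ : IsStoppingRule X n τ) : Measurable τ := by
  have hle : ∀ K, obsFiltration X K ≤ (inferInstance : MeasurableSpace Ω) :=
    fun K => iSup₂_le fun i _ => (hmeas i).comap_le
  refine measurable_to_countable' fun k => ?_
  exact hle (k+1) _ (hτ.2 k)

/-- The bridge: the Bochner expected final rank of a rule of the form `s ∘ vec` equals
the canonical lintegral of `rk s`. -/
lemma bridge (hmeas : ∀ i, Measurable (X i))
    (hindep : iIndepFun X P)
    (hunif : ∀ i, Measure.map (X i) P = volume.restrict (Set.Icc (0 : ℝ) 1))
    {N : ℕ} {s : (Fin N → ℝ) → ℕ} (hsm : Measurable s) (hslt : ∀ x, s x < N)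
    {τ : Ω → ℕ} (hτs : ∀ ω, τ ω = s (vec X N ω)) :
    ENNReal.ofReal (∫ ω, finalRank X N τ ω ∂P) = ∫⁻ x, rk s x ∂(nu N) := by
  have hvm := vec_measurable hmeas N
  have hgm : Measurable (fun ω => valAt (vec X N ω) (s (vec X N ω))) :=
    valAt_measurable hvm (hsm.comp hvm)
  have hXτ : ∀ ω, X (τ ω) ω = valAt (vec X N ω) (s (vec X N ω)) := by
    intro ω
    rw [valAt_eq _ (hslt (vec X N ω))]
    simp only [vec, hτs ω]
  have hfr : ∀ ω, finalRank X N τ ω =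
      ∑ i : Fin N, if (vec X N ω) i ≤ valAt (vec X N ω) (s (vec X N ω)) then (1:ℝ) else 0 := by
    intro ω
    rw [finalRank, ← Fin.sum_univ_eq_sum_range
      (fun j => if X j ω ≤ X (τ ω) ω then (1:ℝ) else 0) N]
    exact Finset.sum_congr rfl fun i _ => by rw [hXτ ω]; rfl
  have hnn : 0 ≤ᵐ[P] finalRank X N τ := by
    refine Filter.Eventually.of_forall fun ω => ?_
    rw [finalRank]
    exact Finset.sum_nonneg fun j _ => by split <;> norm_num
  have hint : Integrable (finalRank X N τ) P := by
    have : finalRank X N τ = fun ω => ∑ i : Fin N,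
        Set.indicator {ω' | (vec X N ω') i ≤ valAt (vec X N ω') (s (vec X N ω'))}
          (fun _ => (1:ℝ)) ω := by
      funext ω
      rw [hfr ω]
      exact Finset.sum_congr rfl fun i _ => by rw [Set.indicator_apply]; rfl
    rw [this]
    refine integrable_finset_sum _ fun i _ => ?_
    exact (integrable_const (1:ℝ)).indicator
      (measurableSet_le ((measurable_pi_apply i).comp hvm) hgm)
  rw [ofReal_integral_eq_lintegral_ofReal hint hnn]
  have hpt : ∀ ω, ENNReal.ofReal (finalRank X N τ ω) = rk s (vec X N ω) := by
    intro ω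
    rw [hfr ω, rk]
    rw [ENNReal.ofReal_sum_of_nonneg (fun i _ => by split <;> norm_num)]
    exact Finset.sum_congr rfl fun i _ => by split <;> simp
  calc (∫⁻ ω, ENNReal.ofReal (finalRank X N τ ω) ∂P) = ∫⁻ ω, rk s (vec X N ω) ∂P :=
        lintegral_congr hpt
    _ = ∫⁻ x, rk s x ∂(Measure.map (vec X N) P) :=
        (lintegral_map (rk_measurable hsm) hvm).symm
    _ = ∫⁻ x, rk s x ∂(nu N) := by rw [map_vec P X hmeas hindep hunif N]


/-! ### Building stopping rules on `Ω` from canonical adapted rules -/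

def extF (n K : ℕ) (u : Fin K → ℝ) : Fin n → ℝ :=
  fun i => if h : i.val < K then u ⟨i.val, h⟩ else 0

lemma extF_measurable (n K : ℕ) : Measurable (extF n K) := by
  refine measurable_pi_lambda _ fun i => ?_
  by_cases h : i.val < K
  · simp only [extF, dif_pos h]; exact measurable_pi_apply _
  · simp only [extF, dif_neg h]; exact measurable_const

lemma isStoppingRule_comp {n : ℕ} {s : (Fin n → ℝ) → ℕ} (hsm : Measurable s)
    (hslt : ∀ x, s x < n)
    (hdep : ∀ (k : ℕ) (x x' : Fin n → ℝ), (∀ i : Fin n, i.val ≤ k → x i = x' i) →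
      s x = k → s x' = k) :
    IsStoppingRule X n (fun ω => s (vec X n ω)) := by
  refine ⟨fun ω => hslt _, fun k => ?_⟩
  rw [obsFiltration_eq_comap]
  by_cases hk : k < n
  · refine MeasurableSpace.measurableSet_comap.mpr ⟨extF n (k+1) ⁻¹' {x | s x = k},
      (extF_measurable n (k+1)) (hsm (measurableSet_singleton k)), ?_⟩
    ext ω
    simp only [Set.mem_preimage, Set.mem_setOf_eq]
    have hagree : ∀ i : Fin n, i.val ≤ k →
        (extF n (k+1) (vec X (k+1) ω)) i = (vec X n ω) i := by
      intro i hi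
      simp only [extF, vec, dif_pos (Nat.lt_succ_of_le hi)]
    constructor
    · intro h; exact hdep k _ _ hagree h
    · intro h; exact hdep k _ _ (fun i hi => (hagree i hi).symm) h
  · have : {ω | s (vec X n ω) = k} = ∅ := by
      ext ω
      simp only [Set.mem_setOf_eq, Set.mem_empty_iff_false, iff_false]
      exact fun h => hk (h ▸ hslt _)
    exact this ▸ @MeasurableSet.empty _ (MeasurableSpace.comap (vec X (k+1)) inferInstance)

/-! ### The canonical rule associated to a stopping rule for horizon `n+1` -/

section TR

variable {n : ℕ} (C : ℕ → Set (Fin (n+1) → ℝ))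

open scoped Classical in
/-- first `k` such that `k ≥ n` or `y ∈ C k`. -/
noncomputable def tR (y : Fin (n+1) → ℝ) : ℕ :=
  Nat.find (p := fun k => n ≤ k ∨ y ∈ C k) ⟨n, Or.inl le_rfl⟩

lemma tR_le (y : Fin (n+1) → ℝ) : tR C y ≤ n := by
  classical
  unfold tR; exact Nat.find_le (Or.inl le_rfl)

lemma tR_eq_iff {y : Fin (n+1) → ℝ} {v : ℕ} :
    tR C y = v ↔ (n ≤ v ∨ y ∈ C v) ∧ ∀ l < v, ¬(n ≤ l ∨ y ∈ C l) := by
  classical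
  unfold tR; exact Nat.find_eq_iff _

lemma tR_eq_of {y : Fin (n+1) → ℝ} {v : ℕ} (hv : n ≤ v ∨ y ∈ C v)
    (hmin : ∀ l < v, ¬(n ≤ l ∨ y ∈ C l)) : tR C y = v :=
  (tR_eq_iff C).mpr ⟨hv, hmin⟩

lemma tR_measurable (hC : ∀ k, MeasurableSet (C k)) : Measurable (tR C) := by
  refine measurable_to_countable' fun v => ?_
  have hset : tR C ⁻¹' {v} =
      {y | n ≤ v ∨ y ∈ C v} ∩ ⋂ l : ℕ, {y | l < v → ¬(n ≤ l ∨ y ∈ C l)} := by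
    ext y
    simp only [Set.mem_preimage, Set.mem_singleton_iff, tR_eq_iff, Set.mem_inter_iff,
      Set.mem_setOf_eq, Set.mem_iInter]
  rw [hset]
  refine MeasurableSet.inter ?_ (MeasurableSet.iInter fun l => ?_)
  · by_cases h : n ≤ v
    · have : {y : Fin (n+1) → ℝ | n ≤ v ∨ y ∈ C v} = Set.univ := by
        ext y; simp [h]
      rw [this]; exact MeasurableSet.univ
    · have : {y : Fin (n+1) → ℝ | n ≤ v ∨ y ∈ C v} = C v := by
        ext y; simp [h]
      rw [this]; exact hC v
  · by_cases hl : l < v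
    · by_cases hnl : n ≤ l
      · have : {y : Fin (n+1) → ℝ | l < v → ¬(n ≤ l ∨ y ∈ C l)} = ∅ := by
          ext y; simp [hl, hnl]
        rw [this]; exact MeasurableSet.empty
      · have : {y : Fin (n+1) → ℝ | l < v → ¬(n ≤ l ∨ y ∈ C l)} = (C l)ᶜ := by
          ext y; simp [hl, hnl]
        rw [this]; exact (hC l).compl
    · have : {y : Fin (n+1) → ℝ | l < v → ¬(n ≤ l ∨ y ∈ C l)} = Set.univ := by
        ext y; simp [hl]
      rw [this]; exact MeasurableSet.univ

lemma tR_dep (hCdep : ∀ (k : ℕ) (y y' : Fin (n+1) → ℝ),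
      (∀ w : Fin (n+1), w.val ≤ k → y w = y' w) → y ∈ C k → y' ∈ C k)
    {v : ℕ} (hv : v ≤ n) {y y' : Fin (n+1) → ℝ}
    (hagree : ∀ w : Fin (n+1), w.val ≤ v → y w = y' w) (h : tR C y = v) : tR C y' = v := by
  obtain ⟨h1, h2⟩ := (tR_eq_iff C).mp h
  refine tR_eq_of C ?_ ?_
  · rcases h1 with h1 | h1
    · exact Or.inl h1
    · exact Or.inr (hCdep v y y' hagree h1)
  · intro l hl hcon
    rcases hcon with hcon | hcon
    · exact (h2 l hl) (Or.inl hcon)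
    · exact (h2 l hl) (Or.inr (hCdep l y' y
        (fun w hw => (hagree w (le_trans hw hl.le)).symm) hcon))

end TR

/-! ### The insertion map -/

/-- Insert the value `m` at slot `j` and scale the other coordinates by `m`. -/
def Phi (n : ℕ) (j : Fin (n+1)) (m : ℝ) (x : Fin n → ℝ) : Fin (n+1) → ℝ :=
  j.insertNth m (fun i => m * x i)

lemma Phi_apply_same {n : ℕ} (j : Fin (n+1)) (m : ℝ) (x : Fin n → ℝ) :
    Phi n j m x j = m := by simp only [Phi, Fin.insertNth_apply_same]

lemma Phi_apply_succAbove {n : ℕ} (j : Fin (n+1)) (m : ℝ) (x : Fin n → ℝ) (i : Fin n) :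
    Phi n j m x (j.succAbove i) = m * x i := by
  simp only [Phi, Fin.insertNth_apply_succAbove]

lemma succAbove_val_cases {n : ℕ} (j : Fin (n+1)) (i : Fin n) :
    ((j.succAbove i).val = i.val ∧ i.val < j.val) ∨
      ((j.succAbove i).val = i.val + 1 ∧ j.val ≤ i.val) := by
  rcases lt_or_ge (Fin.castSucc i) j with h | h
  · left
    constructor
    · rw [Fin.succAbove_of_castSucc_lt _ _ h, Fin.coe_castSucc]
    · simpa [Fin.lt_def] using h
  · right
    constructor
    · rw [Fin.succAbove_of_le_castSucc _ _ h, Fin.val_succ]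
    · simpa [Fin.le_def] using h

lemma Phi_measurable_pair {n : ℕ} (j : Fin (n+1)) :
    Measurable (fun p : ℝ × (Fin n → ℝ) => Phi n j p.1 p.2) := by
  refine measurable_pi_lambda _ fun w => ?_
  by_cases hwj : w = j
  · subst hwj
    simpa only [Phi, Fin.insertNth_apply_same] using measurable_fst
  · obtain ⟨i, hi⟩ := Fin.exists_succAbove_eq hwj
    have : (fun p : ℝ × (Fin n → ℝ) => Phi n j p.1 p.2 w)
        = fun p : ℝ × (Fin n → ℝ) => p.1 * p.2 i := by
      funext p
      rw [← hi, Phi_apply_succAbove]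
    rw [this]
    exact measurable_fst.mul ((measurable_pi_apply i).comp measurable_snd)

lemma Phi_measurable {n : ℕ} (j : Fin (n+1)) (m : ℝ) : Measurable (Phi n j m) :=
  (Phi_measurable_pair j).comp (measurable_const.prodMk measurable_id)

/-- The conversion of a virtual slot to a real index. -/
def convF (n : ℕ) (j : Fin (n+1)) (v : ℕ) : ℕ := if v ≤ j.val then min v (n-1) else v - 1

lemma convF_lt {n : ℕ} (hn : 1 ≤ n) (j : Fin (n+1)) {v : ℕ} (hv : v ≤ n) : convF n j v < n := by
  unfold convF
  split
  · exact lt_of_le_of_lt (min_le_right _ _) (by omega)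
  · omega

lemma Phi_agree {n : ℕ} (j : Fin (n+1)) (m : ℝ) {v : ℕ} (hv : v ≤ n) {x x' : Fin n → ℝ}
    (hag : ∀ i : Fin n, i.val ≤ convF n j v → x i = x' i) :
    ∀ w : Fin (n+1), w.val ≤ v → Phi n j m x w = Phi n j m x' w := by
  intro w hw
  by_cases hwj : w = j
  · subst hwj
    rw [Phi_apply_same, Phi_apply_same]
  · obtain ⟨i, hi⟩ := Fin.exists_succAbove_eq hwj
    rw [← hi, Phi_apply_succAbove, Phi_apply_succAbove]
    have hwv : (j.succAbove i).val ≤ v := by rw [hi]; exact hw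
    congr 1
    apply hag
    have hilt : i.val < n := i.isLt
    rcases succAbove_val_cases j i with ⟨he, hlt⟩ | ⟨he, hge⟩
    · unfold convF
      split
      · exact le_min (by omega) (by omega)
      · omega
    · unfold convF
      have hnv : ¬ (v ≤ j.val) := by omega
      rw [if_neg hnv]
      omega

/-- The simulated rule for the `n`-horizon problem. -/
noncomputable def sR (n : ℕ) (C : ℕ → Set (Fin (n+1) → ℝ)) (j : Fin (n+1)) (m : ℝ)
    (x : Fin n → ℝ) : ℕ := convF n j (tR C (Phi n j m x))

lemma sR_lt {n : ℕ} (hn : 1 ≤ n) (C : ℕ → Set (Fin (n+1) → ℝ)) (j : Fin (n+1)) (m : ℝ) :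
    ∀ x, sR n C j m x < n := fun _ => convF_lt hn j (tR_le C _)

lemma sR_measurable {n : ℕ} {C : ℕ → Set (Fin (n+1) → ℝ)} (hC : ∀ k, MeasurableSet (C k))
    (j : Fin (n+1)) (m : ℝ) : Measurable (sR n C j m) :=
  measurable_from_top.comp ((tR_measurable C hC).comp (Phi_measurable j m))

lemma sR_dep {n : ℕ} {C : ℕ → Set (Fin (n+1) → ℝ)}
    (hCdep : ∀ (k : ℕ) (y y' : Fin (n+1) → ℝ),
      (∀ w : Fin (n+1), w.val ≤ k → y w = y' w) → y ∈ C k → y' ∈ C k)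
    (j : Fin (n+1)) (m : ℝ) :
    ∀ (k : ℕ) (x x' : Fin n → ℝ), (∀ i : Fin n, i.val ≤ k → x i = x' i) →
      sR n C j m x = k → sR n C j m x' = k := by
  intro k x x' hag hx
  have hvn : tR C (Phi n j m x) ≤ n := tR_le C _
  have hcv : convF n j (tR C (Phi n j m x)) = k := hx
  have hstep : tR C (Phi n j m x') = tR C (Phi n j m x) :=
    tR_dep C hCdep hvn (Phi_agree j m hvn (fun i hi => hag i (hcv ▸ hi))) rfl
  rw [sR, hstep, hcv]


/-! ### Pointwise domination -/

lemma rk_sR_le {n : ℕ} (hn : 1 ≤ n) (C : ℕ → Set (Fin (n+1) → ℝ)) (j : Fin (n+1))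
    {m : ℝ} (hm : 0 < m) {x : Fin n → ℝ} (hx : ∀ i, x i ≤ 1) :
    rk (sR n C j m) x ≤ rk (tR C) (Phi n j m x) := by
  set y := Phi n j m x with hy
  set v := tR C y with hv
  have hvn : v ≤ n := tR_le C y
  have hvlt : v < n + 1 := Nat.lt_succ_of_le hvn
  have hsel : valAt y v = y ⟨v, hvlt⟩ := valAt_eq y hvlt
  by_cases hvj : v = j.val
  · have hyj : (⟨v, hvlt⟩ : Fin (n+1)) = j := Fin.eq_of_val_eq hvj
    have hone : ∀ w : Fin (n+1), (if y w ≤ valAt y v then (1:ℝ≥0∞) else 0) = 1 := by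
      intro w
      rw [if_pos]
      rw [hsel, hyj, hy, Phi_apply_same]
      by_cases hwj : w = j
      · subst hwj; rw [Phi_apply_same]
      · obtain ⟨i, hi⟩ := Fin.exists_succAbove_eq hwj
        rw [← hi, Phi_apply_succAbove]
        exact mul_le_of_le_one_right hm.le (hx i)
    have hRHS : rk (tR C) y = ((n+1 : ℕ) : ℝ≥0∞) := by
      rw [rk, ← hv, Finset.sum_congr rfl (fun w _ => hone w)]
      simp
    rw [hRHS]
    calc rk (sR n C j m) x ≤ (n : ℝ≥0∞) := rk_le _ x
      _ ≤ ((n+1 : ℕ) : ℝ≥0∞) := by exact_mod_cast Nat.le_succ n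
  · have hne : (⟨v, hvlt⟩ : Fin (n+1)) ≠ j := fun h => hvj (congrArg Fin.val h)
    obtain ⟨i0, hi0⟩ := Fin.exists_succAbove_eq hne
    have hyv : y ⟨v, hvlt⟩ = m * x i0 := by rw [← hi0, hy, Phi_apply_succAbove]
    have hidx : i0.val = convF n j v := by
      rcases succAbove_val_cases j i0 with ⟨he, hlt⟩ | ⟨he, hge⟩
      · have hv0 : i0.val = v := by rw [← he, hi0]
        have hi0n : i0.val < n := i0.isLt
        unfold convF
        rw [if_pos (by omega), min_eq_left (by omega)]
        omega
      · have hv0 : i0.val + 1 = v := by rw [← he, hi0]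
        unfold convF
        rw [if_neg (by omega)]
        omega
    have hLsel : valAt x (sR n C j m x) = x i0 := by
      have hs : sR n C j m x = i0.val := by rw [sR, ← hy, ← hv, ← hidx]
      rw [hs, valAt_eq x i0.isLt]
    rw [rk, rk, ← hv, hLsel, hsel, hyv]
    have hterm : ∀ i : Fin n, (if x i ≤ x i0 then (1:ℝ≥0∞) else 0)
        = (if y (j.succAbove i) ≤ m * x i0 then (1:ℝ≥0∞) else 0) := by
      intro i
      have h1 : (x i ≤ x i0) ↔ (y (j.succAbove i) ≤ m * x i0) := by
        rw [hy, Phi_apply_succAbove, mul_le_mul_iff_right₀ hm]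
      exact if_congr h1 rfl rfl
    calc (∑ i : Fin n, if x i ≤ x i0 then (1:ℝ≥0∞) else 0)
        = ∑ i : Fin n, (if y (j.succAbove i) ≤ m * x i0 then (1:ℝ≥0∞) else 0) :=
          Finset.sum_congr rfl fun i _ => hterm i
      _ = ∑ w ∈ Finset.image j.succAbove Finset.univ,
            (if y w ≤ m * x i0 then (1:ℝ≥0∞) else 0) :=
          (Finset.sum_image (g := j.succAbove) (s := Finset.univ)
            (f := fun w => if y w ≤ m * x i0 then (1:ℝ≥0∞) else 0)
            (fun a _ b _ h => Fin.succAbove_right_injective h)).symm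
      _ ≤ ∑ w : Fin (n+1), (if y w ≤ m * x i0 then (1:ℝ≥0∞) else 0) :=
          Finset.sum_le_sum_of_subset (Finset.subset_univ _)

/-! ### The strict-maximum events -/

/-- the event that slot `j` is the strict maximum. -/
def Amax (n : ℕ) (j : Fin (n+1)) : Set (Fin (n+1) → ℝ) := {y | ∀ w, w ≠ j → y w < y j}

lemma Amax_measurable {n : ℕ} (j : Fin (n+1)) : MeasurableSet (Amax n j) := by
  have : Amax n j = ⋂ w, {y : Fin (n+1) → ℝ | w ≠ j → y w < y j} := by
    ext y; simp [Amax, Set.mem_iInter]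
  rw [this]
  refine MeasurableSet.iInter fun w => ?_
  by_cases h : w = j
  · have : {y : Fin (n+1) → ℝ | w ≠ j → y w < y j} = Set.univ := by ext y; simp [h]
    rw [this]; exact MeasurableSet.univ
  · have : {y : Fin (n+1) → ℝ | w ≠ j → y w < y j} = {y | y w < y j} := by ext y; simp [h]
    rw [this]; exact measurableSet_lt (measurable_pi_apply w) (measurable_pi_apply j)

lemma sum_Amax_le {n : ℕ} (F : (Fin (n+1) → ℝ) → ℝ≥0∞) (hF : Measurable F) :
    ∑ j : Fin (n+1), ∫⁻ y in Amax n j, F y ∂(nu (n+1)) ≤ ∫⁻ y, F y ∂(nu (n+1)) := by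
  have hI : ∀ j : Fin (n+1), ∫⁻ y in Amax n j, F y ∂(nu (n+1))
      = ∫⁻ y, (Amax n j).indicator F y ∂(nu (n+1)) := by
    intro j
    rw [lintegral_indicator (Amax_measurable j)]
  rw [Finset.sum_congr rfl (fun j _ => hI j), ← lintegral_finset_sum _
    (fun j _ => hF.indicator (Amax_measurable j))]
  refine lintegral_mono fun y => ?_
  by_cases hy : ∃ j0 : Fin (n+1), y ∈ Amax n j0
  · obtain ⟨j0, hj0⟩ := hy
    have : ∀ b : Fin (n+1), b ≠ j0 → (Amax n b).indicator F y = 0 := by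
      intro b hb
      rw [Set.indicator_of_notMem]
      intro hyb
      exact lt_asymm (hj0 b hb) (hyb j0 (Ne.symm hb))
    rw [Finset.sum_eq_single_of_mem j0 (Finset.mem_univ _) (fun b _ hb => this b hb)]
    rw [Set.indicator_of_mem hj0]
  · push_neg at hy
    have : ∀ b : Fin (n+1), (Amax n b).indicator F y = 0 :=
      fun b => Set.indicator_of_notMem (hy b) F
    rw [Finset.sum_congr rfl (fun b _ => this b)]
    simp


/-! ### Change of variables -/

/-- The law of the maximum of `n+1` independent uniforms. -/
noncomputable def muM (n : ℕ) : Measure ℝ :=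
  unif.withDensity (fun m => ENNReal.ofReal (((n:ℝ)+1) * m^n))

lemma muM_univ (n : ℕ) : muM n Set.univ = 1 := by
  have hcont : Continuous (fun m : ℝ => ((n:ℝ)+1) * m^n) :=
    continuous_const.mul (continuous_pow n)
  have hint : Integrable (fun m : ℝ => ((n:ℝ)+1) * m^n) unif := hcont.integrableOn_Icc
  have hnn : 0 ≤ᵐ[unif] (fun m : ℝ => ((n:ℝ)+1) * m^n) := by
    refine Filter.Eventually.mono (ae_restrict_mem measurableSet_Icc) ?_
    intro m hm
    have h0 : (0:ℝ) ≤ m := hm.1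
    positivity
  have hval : (∫ m, ((n:ℝ)+1) * m^n ∂unif) = 1 := by
    show (∫ m in Set.Icc (0:ℝ) 1, ((n:ℝ)+1) * m^n ∂volume) = 1
    rw [integral_Icc_eq_integral_Ioc, ← intervalIntegral.integral_of_le zero_le_one,
      intervalIntegral.integral_const_mul, integral_pow]
    have hne : ((n:ℝ)+1) ≠ 0 := by positivity
    field_simp
    simp
  rw [muM, withDensity_apply _ MeasurableSet.univ, Measure.restrict_univ,
    ← ofReal_integral_eq_lintegral_ofReal hint hnn, hval, ENNReal.ofReal_one]

lemma unif_ae_Ioc : ∀ᵐ m ∂unif, m ∈ Set.Ioc (0:ℝ) 1 := by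
  have h0 : unif {(0:ℝ)} = 0 := by
    rw [unif, Measure.restrict_apply (measurableSet_singleton 0)]
    exact measure_mono_null Set.inter_subset_left Real.volume_singleton
  have hIcc : ∀ᵐ m ∂unif, m ∈ Set.Icc (0:ℝ) 1 := ae_restrict_mem measurableSet_Icc
  have hne : ∀ᵐ m ∂unif, m ≠ 0 := by
    rw [ae_iff]
    have : {m : ℝ | ¬ m ≠ 0} = {0} := by ext m; simp
    rw [this]
    exact h0
  filter_upwards [hIcc, hne] with m h1 h2
  exact ⟨lt_of_le_of_ne h1.1 (Ne.symm h2), h1.2⟩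

lemma lintegral_scale {N : ℕ} {m : ℝ} (hm : 0 < m) {K : (Fin N → ℝ) → ℝ≥0∞}
    (hK : Measurable K) :
    ∫⁻ x, K x ∂(volume : Measure (Fin N → ℝ))
      = ENNReal.ofReal (m^N) * ∫⁻ x, K (m • x) ∂(volume : Measure (Fin N → ℝ)) := by
  have hmap : Measure.map (fun x : Fin N → ℝ => m • x) volume
      = ENNReal.ofReal |(m ^ Module.finrank ℝ (Fin N → ℝ))⁻¹| • volume :=
    Measure.map_addHaar_smul volume (ne_of_gt hm)
  have h2 : ∫⁻ x, K (m • x) ∂(volume : Measure (Fin N → ℝ))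
      = ∫⁻ y, K y ∂(Measure.map (fun x : Fin N → ℝ => m • x) volume) :=
    (lintegral_map hK (measurable_const_smul m)).symm
  rw [h2, hmap, lintegral_smul_measure, smul_eq_mul, ← mul_assoc]
  have hrank : Module.finrank ℝ (Fin N → ℝ) = N := Module.finrank_fin_fun ℝ
  rw [hrank]
  have hpos : (0:ℝ) < m ^ N := pow_pos hm N
  rw [abs_of_pos (inv_pos.mpr hpos), ← ENNReal.ofReal_mul hpos.le,
    mul_inv_cancel₀ (ne_of_gt hpos), ENNReal.ofReal_one, one_mul]

/-- the unit cube. -/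
def boxI (N : ℕ) : Set (Fin N → ℝ) := Set.univ.pi (fun _ => Set.Icc (0:ℝ) 1)

lemma boxI_measurable (N : ℕ) : MeasurableSet (boxI N) :=
  MeasurableSet.univ_pi fun _ => measurableSet_Icc

lemma nu_eq_restrict (N : ℕ) : nu N = (volume : Measure (Fin N → ℝ)).restrict (boxI N) := by
  unfold nu
  apply Measure.pi_eq
  intro s hs
  rw [Measure.restrict_apply (MeasurableSet.univ_pi hs)]
  have hset : Set.pi Set.univ s ∩ boxI N = Set.pi Set.univ (fun i => s i ∩ Set.Icc 0 1) := by
    rw [boxI, ← Set.pi_inter_distrib]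
  rw [hset, volume_pi, Measure.pi_pi]
  exact Finset.prod_congr rfl fun i _ => by rw [unif, Measure.restrict_apply (hs i)]

lemma null_face {N : ℕ} (i : Fin N) :
    (volume : Measure (Fin N → ℝ)) {x | x i = 1} = 0 := by
  have hset : {x : Fin N → ℝ | x i = 1}
      = Set.pi Set.univ (fun w => if w = i then {(1:ℝ)} else Set.univ) := by
    ext x
    simp only [Set.mem_setOf_eq, Set.mem_pi, Set.mem_univ, true_implies]
    constructor
    · intro h w
      by_cases hw : w = i
      · subst hw; simp [h]
      · simp [hw]
    · intro h
      have := h i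
      simpa using this
  rw [hset, volume_pi, Measure.pi_pi]
  refine Finset.prod_eq_zero (Finset.mem_univ i) ?_
  simp

lemma mem_Amax_insertNth {n : ℕ} (j : Fin (n+1)) (m : ℝ) (x' : Fin n → ℝ) :
    (Fin.insertNth (α := fun _ => ℝ) j m x') ∈ Amax n j ↔ ∀ i : Fin n, x' i < m := by
  constructor
  · intro h i
    have := h (j.succAbove i) (Fin.succAbove_ne j i)
    rwa [Fin.insertNth_apply_succAbove, Fin.insertNth_apply_same] at this
  · intro h w hwj
    obtain ⟨i, hi⟩ := Fin.exists_succAbove_eq hwj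
    rw [← hi, Fin.insertNth_apply_succAbove, Fin.insertNth_apply_same]
    exact h i

lemma insertNth_measurable_pair {n : ℕ} (j : Fin (n+1)) :
    Measurable (fun q : ℝ × (Fin n → ℝ) => Fin.insertNth (α := fun _ => ℝ) j q.1 q.2) := by
  refine measurable_pi_lambda _ fun w => ?_
  by_cases hwj : w = j
  · subst hwj
    simpa only [Fin.insertNth_apply_same] using (measurable_fst :
      Measurable (fun q : ℝ × (Fin n → ℝ) => q.1))
  · obtain ⟨i, hi⟩ := Fin.exists_succAbove_eq hwj
    have heq : (fun q : ℝ × (Fin n → ℝ) => Fin.insertNth (α := fun _ => ℝ) j q.1 q.2 w)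
        = fun q : ℝ × (Fin n → ℝ) => q.2 i := by
      funext q
      rw [← hi, Fin.insertNth_apply_succAbove]
    rw [heq]
    exact (measurable_pi_apply i).comp measurable_snd

lemma inner_cov {n : ℕ} (j : Fin (n+1)) {F : (Fin (n+1) → ℝ) → ℝ≥0∞} (hF : Measurable F)
    {m : ℝ} (hm : m ∈ Set.Ioc (0:ℝ) 1) :
    ∫⁻ x', (Amax n j).indicator F (Fin.insertNth (α := fun _ => ℝ) j m x') ∂(nu n)
      = ENNReal.ofReal (m^n) * ∫⁻ x, F (Phi n j m x) ∂(nu n) := by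
  classical
  obtain ⟨hm0, hm1⟩ := hm
  set T : Set (Fin n → ℝ) := {x' | ∀ i, x' i < m} with hT
  have hTmeas : MeasurableSet T := by
    have : T = ⋂ i, {x' : Fin n → ℝ | x' i < m} := by ext x'; simp [hT, Set.mem_iInter]
    rw [this]
    exact MeasurableSet.iInter fun i =>
      measurableSet_lt (measurable_pi_apply i) measurable_const
  -- step 1 : rewrite the indicator
  have hstep1 : ∀ x' : Fin n → ℝ,
      (Amax n j).indicator F (Fin.insertNth (α := fun _ => ℝ) j m x')
      = T.indicator (fun x' => F (Fin.insertNth (α := fun _ => ℝ) j m x')) x' := by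
    intro x'
    rw [Set.indicator_apply, Set.indicator_apply]
    have hiff : ((Fin.insertNth (α := fun _ => ℝ) j m x') ∈ Amax n j) = (x' ∈ T) := by
      rw [eq_iff_iff, mem_Amax_insertNth]
      exact Iff.rfl
    exact if_congr (iff_of_eq hiff) rfl rfl
  rw [lintegral_congr hstep1]
  -- step 2 : pass to volume
  have hcomp : Measurable fun x' : Fin n → ℝ => F (Fin.insertNth (α := fun _ => ℝ) j m x') :=
    hF.comp ((insertNth_measurable_pair j).comp (measurable_const.prodMk measurable_id))
  rw [nu_eq_restrict n, lintegral_indicator hTmeas, Measure.restrict_restrict hTmeas,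
    ← lintegral_indicator (hTmeas.inter (boxI_measurable n))]
  -- step 4 : scaling
  have hKmeas : Measurable ((T ∩ boxI n).indicator
      (fun x' : Fin n → ℝ => F (Fin.insertNth (α := fun _ => ℝ) j m x'))) :=
    hcomp.indicator (hTmeas.inter (boxI_measurable n))
  rw [lintegral_scale hm0 hKmeas]
  congr 1
  -- step 5 : identify the rescaled integrand
  have hstep5 : ∀ x : Fin n → ℝ, (T ∩ boxI n).indicator
      (fun x' : Fin n → ℝ => F (Fin.insertNth (α := fun _ => ℝ) j m x')) (m • x)
      = (Set.univ.pi fun _ : Fin n => Set.Ico (0:ℝ) 1).indicator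
          (fun x => F (Phi n j m x)) x := by
    intro x
    rw [Set.indicator_apply, Set.indicator_apply]
    have hmem : (m • x ∈ T ∩ boxI n) = (x ∈ Set.univ.pi fun _ : Fin n => Set.Ico (0:ℝ) 1) := by
      rw [eq_iff_iff]
      simp only [hT, Set.mem_inter_iff, Set.mem_setOf_eq, boxI, Set.mem_pi, Set.mem_univ,
        true_implies, Pi.smul_apply, smul_eq_mul, Set.mem_Icc, Set.mem_Ico]
      constructor
      · rintro ⟨h1, h2⟩ i
        constructor
        · exact nonneg_of_mul_nonneg_right (h2 i).1 hm0
        · have := h1 i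
          exact lt_of_mul_lt_mul_left (by linarith [this]) hm0.le
      · intro h
        constructor
        · intro i
          have := (h i).2
          calc m * x i < m * 1 := by
                exact mul_lt_mul_of_pos_left this hm0
            _ = m := mul_one m
        · intro i
          refine ⟨mul_nonneg hm0.le (h i).1, ?_⟩
          calc m * x i ≤ m * 1 := mul_le_mul_of_nonneg_left (h i).2.le hm0.le
            _ = m := mul_one m
            _ ≤ 1 := hm1
    have hval : F (Fin.insertNth (α := fun _ => ℝ) j m (m • x)) = F (Phi n j m x) := by
      have hsmul : (m • x) = (fun i => m * x i) := by
        funext i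
        simp [Pi.smul_apply, smul_eq_mul]
      have harg : Fin.insertNth (α := fun _ => ℝ) j m (m • x) = Phi n j m x := by
        rw [Phi, hsmul]
      rw [harg]
    exact if_congr (iff_of_eq hmem) hval rfl
  rw [lintegral_congr hstep5]
  -- step 6 : the half-open cube and the cube agree a.e.
  have hIco : MeasurableSet (Set.univ.pi fun _ : Fin n => Set.Ico (0:ℝ) 1) :=
    MeasurableSet.univ_pi fun _ => measurableSet_Ico
  rw [lintegral_indicator hIco]
  have haeeq : (Set.univ.pi fun _ : Fin n => Set.Ico (0:ℝ) 1)
      =ᵐ[(volume : Measure (Fin n → ℝ))] boxI n := by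
    rw [MeasureTheory.ae_eq_set]
    constructor
    · have hsub : (Set.univ.pi fun _ : Fin n => Set.Ico (0:ℝ) 1) ⊆ boxI n := by
        intro x hx i _
        exact ⟨(hx i trivial).1, (hx i trivial).2.le⟩
      rw [Set.diff_eq_empty.mpr hsub]
      exact measure_empty
    · refine measure_mono_null (fun x hx => ?_)
        (measure_iUnion_null fun i : Fin n => null_face i)
      have h1 : ∀ i : Fin n, x i ∈ Set.Icc (0:ℝ) 1 := fun i => hx.1 i trivial
      have h2 : ∃ i : Fin n, ¬ (x i ∈ Set.Ico (0:ℝ) 1) := by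
        by_contra hc
        push_neg at hc
        exact hx.2 (fun i _ => hc i)
      obtain ⟨i, hi⟩ := h2
      refine Set.mem_iUnion.mpr ⟨i, ?_⟩
      show x i = 1
      have ha := (h1 i).1
      have hb := (h1 i).2
      rw [Set.mem_Ico] at hi
      push_neg at hi
      exact le_antisymm hb (hi ha)
  rw [Measure.restrict_congr_set haeeq, ← nu_eq_restrict n]


lemma cov {n : ℕ} (j : Fin (n+1)) {F : (Fin (n+1) → ℝ) → ℝ≥0∞} (hF : Measurable F) :
    ∫⁻ p : ℝ × (Fin n → ℝ), F (Phi n j p.1 p.2) ∂((muM n).prod (nu n))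
      = ((n : ℝ≥0∞) + 1) * ∫⁻ y in Amax n j, F y ∂(nu (n+1)) := by
  haveI : IsProbabilityMeasure (muM n) := ⟨muM_univ n⟩
  set G := (Amax n j).indicator F with hG
  have hGmeas : Measurable G := hF.indicator (Amax_measurable j)
  -- right-hand side
  have hR1 : ∫⁻ y in Amax n j, F y ∂(nu (n+1)) = ∫⁻ y, G y ∂(nu (n+1)) :=
    (lintegral_indicator (Amax_measurable j) F).symm
  have hmp : MeasurePreserving
      (MeasurableEquiv.piFinSuccAbove (fun _ : Fin (n+1) => ℝ) j).symm
      (unif.prod (nu n)) (nu (n+1)) :=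
    (measurePreserving_piFinSuccAbove (fun _ : Fin (n+1) => unif) j).symm _
  have hR2 : ∫⁻ y, G y ∂(nu (n+1))
      = ∫⁻ q : ℝ × (Fin n → ℝ), G (Fin.insertNth (α := fun _ => ℝ) j q.1 q.2)
          ∂(unif.prod (nu n)) := by
    rw [← hmp.lintegral_comp hGmeas]
    refine lintegral_congr fun q => ?_
    congr 1
  have hR3 : ∫⁻ q : ℝ × (Fin n → ℝ), G (Fin.insertNth (α := fun _ => ℝ) j q.1 q.2)
        ∂(unif.prod (nu n))
      = ∫⁻ m, ∫⁻ x', G (Fin.insertNth (α := fun _ => ℝ) j m x') ∂(nu n) ∂unif :=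
    lintegral_prod _ ((hGmeas.comp (insertNth_measurable_pair j)).aemeasurable)
  -- left-hand side
  have hL1 : ∫⁻ p : ℝ × (Fin n → ℝ), F (Phi n j p.1 p.2) ∂((muM n).prod (nu n))
      = ∫⁻ m, ∫⁻ x, F (Phi n j m x) ∂(nu n) ∂(muM n) :=
    lintegral_prod _ ((hF.comp (Phi_measurable_pair j)).aemeasurable)
  have hdens : Measurable fun m : ℝ => ENNReal.ofReal (((n:ℝ)+1) * m^n) :=
    (measurable_const.mul (measurable_id.pow_const n)).ennreal_ofReal
  have hinner_meas : Measurable fun m => ∫⁻ x, F (Phi n j m x) ∂(nu n) :=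
    (hF.comp (Phi_measurable_pair j)).lintegral_prod_right'
  have hL2 : ∫⁻ m, ∫⁻ x, F (Phi n j m x) ∂(nu n) ∂(muM n)
      = ∫⁻ m, ENNReal.ofReal (((n:ℝ)+1) * m^n) * ∫⁻ x, F (Phi n j m x) ∂(nu n) ∂unif := by
    rw [muM, lintegral_withDensity_eq_lintegral_mul _ hdens hinner_meas]
    rfl
  have hcong : ∫⁻ m, ENNReal.ofReal (((n:ℝ)+1) * m^n) * ∫⁻ x, F (Phi n j m x) ∂(nu n) ∂unif
      = ∫⁻ m, ((n : ℝ≥0∞) + 1) *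
          ∫⁻ x', G (Fin.insertNth (α := fun _ => ℝ) j m x') ∂(nu n) ∂unif := by
    refine lintegral_congr_ae (unif_ae_Ioc.mono fun m hm => ?_)
    show ENNReal.ofReal (((n:ℝ)+1) * m^n) * ∫⁻ x, F (Phi n j m x) ∂(nu n)
      = ((n : ℝ≥0∞) + 1) * ∫⁻ x', G (Fin.insertNth (α := fun _ => ℝ) j m x') ∂(nu n)
    rw [hG, inner_cov j hF hm, ← mul_assoc]
    congr 1
    rw [ENNReal.ofReal_mul (by positivity)]
    congr 1
    rw [show ((n:ℝ)+1) = ((n+1 : ℕ) : ℝ) by push_cast; ring, ENNReal.ofReal_natCast]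
    push_cast
    ring
  have hGin : Measurable (fun q : ℝ × (Fin n → ℝ) =>
      G (Fin.insertNth (α := fun _ => ℝ) j q.1 q.2)) :=
    hGmeas.comp (insertNth_measurable_pair j)
  rw [hL1, hL2, hcong, lintegral_const_mul _ hGin.lintegral_prod_right',
    ← hR3, ← hR2, ← hR1]


lemma prod_ae_good {n : ℕ} : ∀ᵐ p : ℝ × (Fin n → ℝ) ∂((muM n).prod (nu n)),
    0 < p.1 ∧ ∀ i, p.2 i ≤ 1 := by
  haveI : IsProbabilityMeasure (muM n) := ⟨muM_univ n⟩
  rw [ae_iff]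
  have hsub : {p : ℝ × (Fin n → ℝ) | ¬(0 < p.1 ∧ ∀ i, p.2 i ≤ 1)} ⊆
      ({m : ℝ | ¬ 0 < m} ×ˢ Set.univ) ∪ (Set.univ ×ˢ {x : Fin n → ℝ | ¬ ∀ i, x i ≤ 1}) := by
    intro p hp
    simp only [Set.mem_setOf_eq, not_and_or] at hp
    rcases hp with h | h
    · exact Or.inl ⟨h, trivial⟩
    · exact Or.inr ⟨trivial, h⟩
  refine measure_mono_null hsub (measure_union_null ?_ ?_)
  · rw [Measure.prod_prod]
    have h1 : unif {m : ℝ | ¬ 0 < m} = 0 := by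
      have hset : {m : ℝ | ¬ 0 < m} = Set.Iic 0 := by ext m; simp
      rw [hset, unif, Measure.restrict_apply measurableSet_Iic]
      have : Set.Iic (0:ℝ) ∩ Set.Icc 0 1 = {0} := by
        ext t
        simp only [Set.mem_inter_iff, Set.mem_Iic, Set.mem_Icc, Set.mem_singleton_iff]
        constructor
        · rintro ⟨h1, h2, _⟩; linarith
        · rintro rfl; norm_num
      rw [this]
      exact Real.volume_singleton
    have h2 : muM n {m : ℝ | ¬ 0 < m} = 0 := by
      rw [muM]
      exact (withDensity_absolutelyContinuous unif _) h1
    rw [h2, zero_mul]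
  · rw [Measure.prod_prod, measure_univ, one_mul]
    have hsub2 : {x : Fin n → ℝ | ¬ ∀ i, x i ≤ 1} ⊆ ⋃ i : Fin n, {x : Fin n → ℝ | 1 < x i} := by
      intro x hx
      simp only [Set.mem_setOf_eq] at hx
      push_neg at hx
      obtain ⟨i, hi⟩ := hx
      exact Set.mem_iUnion.mpr ⟨i, hi⟩
    refine measure_mono_null hsub2 (measure_iUnion_null fun i => ?_)
    have hset : {x : Fin n → ℝ | 1 < x i}
        = Set.pi Set.univ (fun w => if w = i then Set.Ioi (1:ℝ) else Set.univ) := by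
      ext x
      simp only [Set.mem_setOf_eq, Set.mem_pi, Set.mem_univ, true_implies]
      constructor
      · intro h w
        by_cases hw : w = i
        · subst hw; simpa using h
        · simp [hw]
      · intro h
        have := h i
        simpa using this
    rw [hset]
    unfold nu
    rw [Measure.pi_pi]
    refine Finset.prod_eq_zero (Finset.mem_univ i) ?_
    rw [if_pos rfl, unif, Measure.restrict_apply measurableSet_Ioi]
    have hIoi : Set.Ioi (1:ℝ) ∩ Set.Icc 0 1 = ∅ := by
      ext t
      simp only [Set.mem_inter_iff, Set.mem_Ioi, Set.mem_Icc, Set.mem_empty_iff_false,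
        iff_false, not_and]
      rintro h1 h2 h3
      linarith
    rw [hIoi]
    exact measure_empty

lemma rk_sR_pair_measurable {n : ℕ} {C : ℕ → Set (Fin (n+1) → ℝ)}
    (hC : ∀ k, MeasurableSet (C k)) (j : Fin (n+1)) :
    Measurable (fun p : ℝ × (Fin n → ℝ) => rk (sR n C j p.1) p.2) := by
  have hs : Measurable (fun p : ℝ × (Fin n → ℝ) => sR n C j p.1 p.2) := by
    have heq : (fun p : ℝ × (Fin n → ℝ) => sR n C j p.1 p.2)
        = (fun v => convF n j v) ∘ (tR C) ∘ (fun p : ℝ × (Fin n → ℝ) => Phi n j p.1 p.2) := rfl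
    rw [heq]
    exact measurable_from_top.comp ((tR_measurable C hC).comp (Phi_measurable_pair j))
  unfold rk
  refine Finset.measurable_sum _ fun i _ => Measurable.ite ?_ measurable_const measurable_const
  have h2i : Measurable (fun a : ℝ × (Fin n → ℝ) => a.2 i) :=
    (measurable_pi_apply i).comp measurable_snd
  exact measurableSet_le h2i (valAt_measurable measurable_snd hs)

/-- The key estimate: the value of the `n`-horizon problem is at most the expected final
rank of any stopping rule for the `(n+1)`-horizon problem. -/
lemma key (hmeas : ∀ i, Measurable (X i))
    (hindep : iIndepFun X P)
    (hunif : ∀ i, Measure.map (X i) P = volume.restrict (Set.Icc (0 : ℝ) 1))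
    {n : ℕ} (hn : 1 ≤ n) {τ : Ω → ℕ}
    (hτ : IsStoppingRule X (n+1) τ) :
    robbinsValue P X n ≤ ∫ ω, finalRank X (n+1) τ ω ∂P := by
  classical
  haveI : IsProbabilityMeasure (muM n) := ⟨muM_univ n⟩
  have hobs : ∀ k, ∃ B : Set (Fin (k+1) → ℝ),
      MeasurableSet B ∧ vec X (k+1) ⁻¹' B = {ω | τ ω = k} := by
    intro k
    have hmem := hτ.2 k
    rw [obsFiltration_eq_comap] at hmem
    exact MeasurableSpace.measurableSet_comap.mp hmem
  choose B hBmeas hBeq using hobs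
  set C : ℕ → Set (Fin (n+1) → ℝ) := fun k => (extF (k+1) (n+1)) ⁻¹' (B k) with hC
  have hCmeas : ∀ k, MeasurableSet (C k) := fun k => (extF_measurable _ _) (hBmeas k)
  have hCdep : ∀ (k : ℕ) (y y' : Fin (n+1) → ℝ),
      (∀ w : Fin (n+1), w.val ≤ k → y w = y' w) → y ∈ C k → y' ∈ C k := by
    intro k y y' hag hy
    have hext : extF (k+1) (n+1) y = extF (k+1) (n+1) y' := by
      funext i
      by_cases h : i.val < n+1
      · simp only [extF, dif_pos h]
        exact hag ⟨i.val, h⟩ (Nat.lt_succ_iff.mp i.isLt)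
      · simp only [extF, dif_neg h]
    simp only [hC, Set.mem_preimage] at hy ⊢
    rw [← hext]
    exact hy
  have hlink : ∀ ω (k : ℕ), k < n+1 → (vec X (n+1) ω ∈ C k ↔ τ ω = k) := by
    intro ω k hk
    have hext : extF (k+1) (n+1) (vec X (n+1) ω) = vec X (k+1) ω := by
      funext i
      have hi : i.val < n+1 := lt_of_lt_of_le i.isLt hk
      simp only [extF, vec, dif_pos hi]
    simp only [hC, Set.mem_preimage, hext]
    constructor
    · intro h
      have hm : ω ∈ vec X (k+1) ⁻¹' B k := h
      rw [hBeq k] at hm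
      exact hm
    · intro h
      have hm : ω ∈ {ω | τ ω = k} := h
      rw [← hBeq k] at hm
      exact hm
  have htvec : ∀ ω, tR C (vec X (n+1) ω) = τ ω := by
    intro ω
    have hτlt : τ ω < n + 1 := hτ.1 ω
    refine tR_eq_of C ?_ ?_
    · by_cases h : n ≤ τ ω
      · exact Or.inl h
      · exact Or.inr ((hlink ω (τ ω) hτlt).mpr rfl)
    · intro l hl hcon
      rcases hcon with hcon | hcon
      · omega
      · have := (hlink ω l (by omega)).mp hcon
        omega
  have htm := tR_measurable C hCmeas
  have htlt : ∀ y, tR C y < n + 1 := fun y => Nat.lt_succ_of_le (tR_le C y)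
  have hbτ : ENNReal.ofReal (∫ ω, finalRank X (n+1) τ ω ∂P)
      = ∫⁻ y, rk (tR C) y ∂(nu (n+1)) :=
    bridge P X hmeas hindep hunif htm htlt (fun ω => (htvec ω).symm)
  set S : Set ℝ := {r | ∃ τ', IsStoppingRule X n τ' ∧ r = ∫ ω, finalRank X n τ' ω ∂P} with hS
  have hbdd : BddBelow S := by
    refine ⟨0, fun r hr => ?_⟩
    obtain ⟨τ', hτ', rfl⟩ := hr
    exact integral_nonneg fun ω => Finset.sum_nonneg fun _ _ => by split <;> norm_num
  have hperj : ∀ j : Fin (n+1), ENNReal.ofReal (robbinsValue P X n)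
      ≤ ((n : ℝ≥0∞) + 1) * ∫⁻ y in Amax n j, rk (tR C) y ∂(nu (n+1)) := by
    intro j
    have hstep1 : ∀ m : ℝ, ENNReal.ofReal (robbinsValue P X n)
        ≤ ∫⁻ x, rk (sR n C j m) x ∂(nu n) := by
      intro m
      have hrule : IsStoppingRule X n (fun ω => sR n C j m (vec X n ω)) :=
        isStoppingRule_comp X (sR_measurable hCmeas j m) (sR_lt hn C j m)
          (sR_dep hCdep j m)
      have hmem : (∫ ω, finalRank X n (fun ω => sR n C j m (vec X n ω)) ω ∂P) ∈ S :=
        ⟨_, hrule, rfl⟩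
      have hle : robbinsValue P X n
          ≤ ∫ ω, finalRank X n (fun ω => sR n C j m (vec X n ω)) ω ∂P := csInf_le hbdd hmem
      calc ENNReal.ofReal (robbinsValue P X n)
          ≤ ENNReal.ofReal (∫ ω, finalRank X n (fun ω => sR n C j m (vec X n ω)) ω ∂P) :=
            ENNReal.ofReal_le_ofReal hle
        _ = ∫⁻ x, rk (sR n C j m) x ∂(nu n) :=
            bridge P X hmeas hindep hunif (sR_measurable hCmeas j m) (sR_lt hn C j m)
              (fun ω => rfl)
    have hjoint := rk_sR_pair_measurable hCmeas j
    calc ENNReal.ofReal (robbinsValue P X n)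
        = ∫⁻ _, ENNReal.ofReal (robbinsValue P X n) ∂(muM n) := by
          rw [lintegral_const, measure_univ, mul_one]
      _ ≤ ∫⁻ m, (∫⁻ x, rk (sR n C j m) x ∂(nu n)) ∂(muM n) :=
          lintegral_mono fun m => hstep1 m
      _ = ∫⁻ p : ℝ × (Fin n → ℝ), rk (sR n C j p.1) p.2 ∂((muM n).prod (nu n)) :=
          (lintegral_prod _ hjoint.aemeasurable).symm
      _ ≤ ∫⁻ p : ℝ × (Fin n → ℝ), rk (tR C) (Phi n j p.1 p.2) ∂((muM n).prod (nu n)) := by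
          refine lintegral_mono_ae (prod_ae_good.mono fun p hp => ?_)
          exact rk_sR_le hn C j hp.1 hp.2
      _ = ((n : ℝ≥0∞) + 1) * ∫⁻ y in Amax n j, rk (tR C) y ∂(nu (n+1)) :=
          cov j (rk_measurable htm)
  have hsum : ((n : ℝ≥0∞) + 1) * ENNReal.ofReal (robbinsValue P X n)
      ≤ ((n : ℝ≥0∞) + 1) * ∫⁻ y, rk (tR C) y ∂(nu (n+1)) := by
    have hcard : ((n : ℝ≥0∞) + 1) * ENNReal.ofReal (robbinsValue P X n)
        = ∑ _j : Fin (n+1), ENNReal.ofReal (robbinsValue P X n) := by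
      rw [Finset.sum_const, Finset.card_univ, Fintype.card_fin, nsmul_eq_mul]
      congr 1
      push_cast
      ring
    rw [hcard]
    calc (∑ _j : Fin (n+1), ENNReal.ofReal (robbinsValue P X n))
        ≤ ∑ j : Fin (n+1), ((n : ℝ≥0∞) + 1) * ∫⁻ y in Amax n j, rk (tR C) y ∂(nu (n+1)) :=
          Finset.sum_le_sum fun j _ => hperj j
      _ = ((n : ℝ≥0∞) + 1) * ∑ j : Fin (n+1), ∫⁻ y in Amax n j, rk (tR C) y ∂(nu (n+1)) :=
          (Finset.mul_sum _ _ _).symm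
      _ ≤ ((n : ℝ≥0∞) + 1) * ∫⁻ y, rk (tR C) y ∂(nu (n+1)) :=
          mul_le_mul_right (sum_Amax_le _ (rk_measurable htm)) _
  have hcancel : ENNReal.ofReal (robbinsValue P X n) ≤ ∫⁻ y, rk (tR C) y ∂(nu (n+1)) := by
    have h0 : ((n : ℝ≥0∞) + 1) ≠ 0 := by simp
    have ht : ((n : ℝ≥0∞) + 1) ≠ ⊤ := ENNReal.add_ne_top.mpr
      ⟨ENNReal.natCast_ne_top n, ENNReal.one_ne_top⟩
    exact (ENNReal.mul_le_mul_iff_right h0 ht).mp hsum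
  rw [← hbτ] at hcancel
  have hnn : 0 ≤ ∫ ω, finalRank X (n+1) τ ω ∂P :=
    integral_nonneg fun ω => Finset.sum_nonneg fun _ _ => by split <;> norm_num
  exact (ENNReal.ofReal_le_ofReal_iff hnn).mp hcancel

end Robbins5

/-- The value of Robbins' problem is nondecreasing in the horizon:
`v n ≤ v (n+1)` for every `n ≥ 1`. -/
theorem robbinsValue_mono
    {Ω : Type*} [MeasurableSpace Ω] (P : Measure Ω) [IsProbabilityMeasure P]
    (X : ℕ → Ω → ℝ)
    (hmeas : ∀ i, Measurable (X i))
    (hindep : iIndepFun X P)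
    (hunif : ∀ i, Measure.map (X i) P = volume.restrict (Set.Icc (0 : ℝ) 1)) :
    ∀ n, 1 ≤ n → robbinsValue P X n ≤ robbinsValue P X (n + 1) := by
  intro n hn
  have hconst : IsStoppingRule X (n+1) (fun _ => 0) := by
    refine ⟨fun ω => Nat.succ_pos n, fun k => ?_⟩
    rcases Nat.eq_zero_or_pos k with rfl | hk
    · have huniv : {ω : Ω | (fun _ : Ω => (0:ℕ)) ω = 0} = Set.univ := by ext ω; simp
      exact huniv ▸ @MeasurableSet.univ _ (obsFiltration X (0+1))
    · have hemp : {ω : Ω | (fun _ : Ω => (0:ℕ)) ω = k} = ∅ := by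
        ext ω; simp; omega
      exact hemp ▸ @MeasurableSet.empty _ (obsFiltration X (k+1))
  have hne : {r | ∃ τ, IsStoppingRule X (n+1) τ ∧
      r = ∫ ω, finalRank X (n+1) τ ω ∂P}.Nonempty :=
    ⟨_, ⟨_, hconst, rfl⟩⟩
  refine le_csInf hne ?_
  rintro r ⟨τ, hτ, rfl⟩
  exact Robbins5.key P X hmeas hindep hunif hn hτ
end

section
/- The limiting memoryless value satisfies ṽ = lim_{n→∞} ṽ_n ≤ 2.34; in particular, for all sufficiently large n the memoryless threshold rule with thresholds φ_j(n) = c/(n−j+c) for a suitable constant c > 1 achieves an expected final rank below 2.34. -/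
open MeasureTheory ProbabilityTheory Filter

/-- The memoryless threshold rule (`0`-based): stop at the least index `j < n` with
`X j ω ≤ φ j`; the junk value `n - 1` is returned if no index qualifies (with `φ (n-1) = 1`
this happens only on a null set). -/
noncomputable def mlRule {Ω : Type*} (X : ℕ → Ω → ℝ) (n : ℕ) (φ : ℕ → ℝ) (ω : Ω) : ℕ :=
  sInf ({j | j < n ∧ X j ω ≤ φ j} ∪ {n - 1})

/-- The memoryless value `ṽ n`: the infimum of the expected final rank over all memoryless
threshold rules with thresholds in `[0,1]` whose last threshold equals `1`. -/
noncomputable def mlValue {Ω : Type*} [MeasurableSpace Ω] (P : Measure Ω)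
    (X : ℕ → Ω → ℝ) (n : ℕ) : ℝ :=
  sInf {r | ∃ φ : ℕ → ℝ, (∀ j < n, φ j ∈ Set.Icc (0 : ℝ) 1) ∧ φ (n - 1) = 1 ∧
    r = ∫ ω, finalRank X n (mlRule X n φ) ω ∂P}




noncomputable def unifM : Measure ℝ := volume.restrict (Set.Icc 0 1)

instance unifM_prob : IsProbabilityMeasure unifM := by
  constructor
  rw [unifM, Measure.restrict_apply MeasurableSet.univ, Set.univ_inter, Real.volume_Icc]
  norm_num

lemma unifM_Iic {a : ℝ} (h0 : 0 ≤ a) (h1 : a ≤ 1) :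
    unifM (Set.Iic a) = ENNReal.ofReal a := by
  rw [unifM, Measure.restrict_apply measurableSet_Iic]
  have : Set.Iic a ∩ Set.Icc 0 1 = Set.Icc 0 a := by
    ext x; simp only [Set.mem_inter_iff, Set.mem_Iic, Set.mem_Icc]
    constructor
    · rintro ⟨h, h2, _⟩; exact ⟨h2, h⟩
    · rintro ⟨h2, h⟩; exact ⟨h, h2, h.trans h1⟩
  rw [this, Real.volume_Icc, sub_zero]

lemma unifM_Ioi {a : ℝ} (h0 : 0 ≤ a) (h1 : a ≤ 1) :
    unifM (Set.Ioi a) = ENNReal.ofReal (1 - a) := by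
  rw [unifM, Measure.restrict_apply measurableSet_Ioi]
  have : Set.Ioi a ∩ Set.Icc 0 1 = Set.Ioc a 1 := by
    ext x; simp only [Set.mem_inter_iff, Set.mem_Ioi, Set.mem_Icc, Set.mem_Ioc]
    constructor
    · rintro ⟨h, _, h2⟩; exact ⟨h, h2⟩
    · rintro ⟨h, h2⟩; exact ⟨h, h0.trans h.le, h2⟩
  rw [this, Real.volume_Ioc]

lemma unifM_Ioc {a b : ℝ} (h0 : 0 ≤ a) (h1 : b ≤ 1) :
    unifM (Set.Ioc a b) = ENNReal.ofReal (b - a) := by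
  rw [unifM, Measure.restrict_apply measurableSet_Ioc]
  have : Set.Ioc a b ∩ Set.Icc 0 1 = Set.Ioc a b := by
    apply Set.inter_eq_left.2
    intro x hx; exact ⟨h0.trans hx.1.le, hx.2.trans h1⟩
  rw [this, Real.volume_Ioc]

lemma lint_linear {a b : ℝ} (hab : a ≤ b) :
    ∫⁻ t in Set.Ioc a b, ENNReal.ofReal (t - a) = ENNReal.ofReal ((b - a)^2 / 2) := by
  rw [← ofReal_integral_eq_lintegral_ofReal]
  · congr 1
    rw [← intervalIntegral.integral_of_le hab]
    have : (∫ t in a..b, (t - a)) = (∫ t in a..b, t) - ∫ t in a..b, (a : ℝ) :=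
      intervalIntegral.integral_sub intervalIntegral.intervalIntegrable_id
        (intervalIntegrable_const (c := a))
    rw [this, integral_id, intervalIntegral.integral_const]
    simp only [smul_eq_mul]
    ring
  · exact (continuous_id.sub continuous_const).integrableOn_Ioc

  · filter_upwards [ae_restrict_mem measurableSet_Ioc] with t ht
    simp [sub_nonneg.2 ht.1.le]



lemma slice_lemma {N : ℕ} (k : Fin (N+1)) (U : Set ℝ) (hU : MeasurableSet U)
    (g : Fin (N+1) → ℝ → Set ℝ) (hgk : ∀ t, g k t = Set.univ)
    (hg : ∀ i, MeasurableSet {p : ℝ × ℝ | p.2 ∈ g i p.1}) :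
    Measure.pi (fun _ : Fin (N+1) => unifM) {x | x k ∈ U ∧ ∀ i, x i ∈ g i (x k)}
      = ∫⁻ t in U, ∏ i, unifM (g i t) ∂unifM := by
  set e := MeasurableEquiv.piFinSuccAbove (fun _ : Fin (N+1) => ℝ) k with he
  have hmp := measurePreserving_piFinSuccAbove (fun _ : Fin (N+1) => unifM) k
  set S : Set (ℝ × (Fin N → ℝ)) :=
    {p | p.1 ∈ U ∧ ∀ i', p.2 i' ∈ g (k.succAbove i') p.1} with hS
  have hSm : MeasurableSet S := by
    have h1 : MeasurableSet {p : ℝ × (Fin N → ℝ) | p.1 ∈ U} := measurable_fst hU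
    have h2 : ∀ i' : Fin N, MeasurableSet {p : ℝ × (Fin N → ℝ) | p.2 i' ∈ g (k.succAbove i') p.1} := by
      intro i'
      have : Measurable (fun p : ℝ × (Fin N → ℝ) => (p.1, p.2 i')) :=
        measurable_fst.prodMk (measurable_snd.eval)
      exact this (hg (k.succAbove i'))
    have : S = {p : ℝ × (Fin N → ℝ) | p.1 ∈ U} ∩ ⋂ i', {p | p.2 i' ∈ g (k.succAbove i') p.1} := by
      ext p; simp [hS]
    rw [this]
    exact h1.inter (MeasurableSet.iInter h2)
  have hBS : {x : Fin (N+1) → ℝ | x k ∈ U ∧ ∀ i, x i ∈ g i (x k)} = e ⁻¹' S := by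
    ext x
    have hex : e x = (x k, fun j => x (k.succAbove j)) := rfl
    simp only [Set.mem_preimage, hex, hS, Set.mem_setOf_eq]
    constructor
    · rintro ⟨h1, h2⟩; exact ⟨h1, fun i' => h2 _⟩
    · rintro ⟨h1, h2⟩
      refine ⟨h1, ?_⟩
      rw [Fin.forall_iff_succAbove k]
      exact ⟨by rw [hgk]; trivial, h2⟩
  rw [hBS, hmp.measure_preimage hSm.nullMeasurableSet, Measure.prod_apply hSm]
  have hpt : ∀ t : ℝ, (Measure.pi fun _ : Fin N => unifM) (Prod.mk t ⁻¹' S)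
      = Set.indicator U (fun t => ∏ i, unifM (g i t)) t := by
    intro t
    by_cases ht : t ∈ U
    · have hslice : Prod.mk t ⁻¹' S = Set.pi Set.univ (fun i' => g (k.succAbove i') t) := by
        ext y; simp [hS, ht, Set.mem_pi]
      rw [hslice, Measure.pi_pi, Set.indicator_of_mem ht]
      rw [Fin.prod_univ_succAbove (fun i => unifM (g i t)) k, hgk t, measure_univ, one_mul]
    · have hslice : Prod.mk t ⁻¹' S = ∅ := by
        ext y; simp [hS, ht]
      simp [hslice, Set.indicator_of_notMem ht]
  rw [lintegral_congr hpt, lintegral_indicator hU]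



def Aev {Ω : Type*} (X : ℕ → Ω → ℝ) (φ : ℕ → ℝ) (k : ℕ) : Set Ω :=
  {ω | X k ω ≤ φ k ∧ ∀ i < k, φ i < X i ω}

lemma mlRule_eq_on_Aev {Ω : Type*} (X : ℕ → Ω → ℝ) (n : ℕ) (φ : ℕ → ℝ)
    {k : ℕ} (hk : k < n) {ω : Ω} (hω : ω ∈ Aev X φ k) : mlRule X n φ ω = k := by
  apply le_antisymm
  · exact Nat.sInf_le (Or.inl ⟨hk, hω.1⟩)
  · apply le_csInf ⟨n - 1, Or.inr rfl⟩
    rintro m (⟨hmn, hm⟩ | hm)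
    · by_contra h
      exact absurd hm (not_le.2 (hω.2 m (not_le.1 h)))
    · simp only [Set.mem_singleton_iff] at hm
      subst hm
      omega
lemma Aev_disjoint {Ω : Type*} (X : ℕ → Ω → ℝ) (φ : ℕ → ℝ)
    {k k' : ℕ} (h : k < k') : Aev X φ k ∩ Aev X φ k' = ∅ := by
  ext ω
  simp only [Set.mem_inter_iff, Set.mem_empty_iff_false, iff_false, not_and]
  intro h1 h2
  exact absurd h1.1 (not_le.2 (h2.2 k h))

lemma Aev_compl_subset {Ω : Type*} (X : ℕ → Ω → ℝ) (φ : ℕ → ℝ) (n : ℕ) (hn : 0 < n) :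
    (⋃ k ∈ Finset.range n, Aev X φ k)ᶜ ⊆ {ω | φ (n-1) < X (n-1) ω} := by
  intro ω hω
  simp only [Set.mem_compl_iff, Set.mem_iUnion, Finset.mem_range, not_exists] at hω
  have key : ∀ k, k < n → φ k < X k ω := by
    intro k
    induction k using Nat.strong_induction_on with
    | _ k ih =>
      intro hkn
      by_contra h
      exact hω k hkn ⟨not_lt.1 h, fun i hi => ih i hi (hi.trans hkn)⟩
  exact key (n-1) (by omega)



lemma map_eq_pi {Ω : Type*} [MeasurableSpace Ω] (P : Measure Ω) [IsProbabilityMeasure P]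
    (X : ℕ → Ω → ℝ) (hmeas : ∀ i, Measurable (X i))
    (hindep : iIndepFun X P)
    (hunif : ∀ i, Measure.map (X i) P = unifM) (n : ℕ) :
    Measure.map (fun ω (i : Fin n) => X i ω) P = Measure.pi (fun _ => unifM) := by
  have hYm : Measurable (fun ω (i : Fin n) => X i ω) :=
    measurable_pi_lambda _ (fun i => hmeas i)
  refine (Measure.pi_eq fun s hs => ?_).symm
  rw [Measure.map_apply hYm (MeasurableSet.univ_pi hs)]
  set s' : ℕ → Set ℝ := fun i => if h : i < n then s ⟨i, h⟩ else Set.univ with hs'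
  have hs'm : ∀ i, MeasurableSet (s' i) := by
    intro i; rw [hs']; dsimp only
    split
    · exact hs _
    · exact MeasurableSet.univ
  have hpre : (fun ω (i : Fin n) => X i ω) ⁻¹' (Set.pi Set.univ s)
      = ⋂ i ∈ Finset.range n, X i ⁻¹' s' i := by
    ext ω
    simp only [Set.mem_preimage, Set.mem_pi, Set.mem_univ, forall_true_left,
      Set.mem_iInter, Finset.mem_range, hs']
    constructor
    · intro h i hi
      simp only [dif_pos hi]
      exact h ⟨i, hi⟩
    · intro h i
      have := h i.1 i.2
      simpa only [dif_pos i.2, Fin.eta] using this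
  rw [hpre, hindep.meas_biInter (fun i _ => ⟨s' i, hs'm i, rfl⟩)]
  have hPi : ∀ i, P (X i ⁻¹' s' i) = unifM (s' i) := by
    intro i
    rw [← hunif i, Measure.map_apply (hmeas i) (hs'm i)]
  rw [Finset.prod_congr rfl (fun i _ => hPi i)]
  rw [← Fin.prod_univ_eq_prod_range (fun i => unifM (s' i)) n]
  apply Finset.prod_congr rfl
  intro i _
  simp only [hs', dif_pos i.2, Fin.eta]



/-- coordinate constraint sets -/
def Gset (φ : ℕ → ℝ) (k j : ℕ) (i : ℕ) (t : ℝ) : Set ℝ :=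
  if i = k then Set.univ
  else if i < k then (if i = j then Set.Ioc (φ i) t else Set.Ioi (φ i))
  else (if i = j then Set.Iic t else Set.univ)

def Bset (φ : ℕ → ℝ) (n k j : ℕ) (hk : k < n) : Set (Fin n → ℝ) :=
  {x | x ⟨k, hk⟩ ∈ Set.Iic (φ k) ∧ ∀ i : Fin n, x i ∈ Gset φ k j ↑i (x ⟨k, hk⟩)}

lemma Gset_meas (φ : ℕ → ℝ) (k j i : ℕ) :
    MeasurableSet {p : ℝ × ℝ | p.2 ∈ Gset φ k j i p.1} := by
  unfold Gset
  split
  · simp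
  · split
    · split
      · exact (measurableSet_lt measurable_const measurable_snd).inter
          (measurableSet_le measurable_snd measurable_fst)
      · exact measurableSet_lt measurable_const measurable_snd
    · split
      · exact measurableSet_le measurable_snd measurable_fst
      · simp

lemma Bset_meas (φ : ℕ → ℝ) (n k j : ℕ) (hk : k < n) :
    MeasurableSet (Bset φ n k j hk) := by
  have h1 : MeasurableSet {x : Fin n → ℝ | x ⟨k, hk⟩ ∈ Set.Iic (φ k)} :=
    (measurable_pi_apply _) measurableSet_Iic
  have h2 : ∀ i : Fin n, MeasurableSet {x : Fin n → ℝ | x i ∈ Gset φ k j ↑i (x ⟨k, hk⟩)} := by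
    intro i
    have hm : Measurable (fun x : Fin n → ℝ => (x ⟨k, hk⟩, x i)) :=
      (measurable_pi_apply _).prodMk (measurable_pi_apply _)
    exact hm (Gset_meas φ k j i)
  have : Bset φ n k j hk = {x : Fin n → ℝ | x ⟨k, hk⟩ ∈ Set.Iic (φ k)}
      ∩ ⋂ i : Fin n, {x | x i ∈ Gset φ k j ↑i (x ⟨k, hk⟩)} := by
    ext x; simp [Bset]
  rw [this]
  exact h1.inter (MeasurableSet.iInter h2)

/-- the pushforward identification of the event -/
lemma Bset_preimage {Ω : Type*} (X : ℕ → Ω → ℝ) (φ : ℕ → ℝ) (n k j : ℕ)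
    (hk : k < n) (hj : j < n) :
    (fun ω (i : Fin n) => X i ω) ⁻¹' (Bset φ n k j hk)
      = ({ω | X k ω ≤ φ k ∧ ∀ i < k, φ i < X i ω} ∩ {ω | X j ω ≤ X k ω}) := by
  ext ω
  simp only [Set.mem_preimage, Bset, Set.mem_setOf_eq, Set.mem_Iic, Set.mem_inter_iff]
  constructor
  · rintro ⟨h1, h2⟩
    refine ⟨⟨h1, fun i hi => ?_⟩, ?_⟩
    · have := h2 ⟨i, hi.trans hk⟩
      simp only [Gset] at this
      rw [if_neg (by omega), if_pos hi] at this
      split at this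
      · exact this.1
      · exact this
    · rcases Nat.lt_trichotomy j k with h | h | h
      · have := h2 ⟨j, hj⟩
        simp only [Gset] at this
        rw [if_neg (by omega), if_pos h] at this
        simp only [if_pos] at this
        exact this.2
      · subst h; rfl
      · have := h2 ⟨j, hj⟩
        simp only [Gset] at this
        rw [if_neg (by omega), if_neg (by omega)] at this
        simp only [if_pos] at this
        exact this
  · rintro ⟨⟨h1, h2⟩, h3⟩
    refine ⟨h1, fun i => ?_⟩
    rcases i with ⟨iv, hiv⟩
    simp only [Gset]
    by_cases hik : iv = k
    · rw [if_pos hik]; trivial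
    · rw [if_neg hik]
      by_cases hilt : iv < k
      · rw [if_pos hilt]
        by_cases hij : iv = j
        · subst hij
          rw [if_pos rfl]
          exact ⟨h2 _ hilt, h3⟩
        · rw [if_neg hij]
          exact h2 _ hilt
      · rw [if_neg hilt]
        by_cases hij : iv = j
        · subst hij
          rw [if_pos rfl]
          exact h3
        · rw [if_neg hij]; trivial

lemma Bset_pi (φ : ℕ → ℝ) (N k j : ℕ) (hk : k < N+1) :
    Measure.pi (fun _ : Fin (N+1) => unifM) (Bset φ (N+1) k j hk)
      = ∫⁻ t in Set.Iic (φ k), ∏ i : Fin (N+1), unifM (Gset φ k j ↑i t) ∂unifM := by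
  have := slice_lemma (⟨k, hk⟩ : Fin (N+1)) (Set.Iic (φ k)) measurableSet_Iic
    (fun i t => Gset φ k j ↑i t) (fun t => by simp [Gset]) (fun i => Gset_meas φ k j ↑i)
  exact this

section prods
variable {φ : ℕ → ℝ} {n : ℕ}

lemma prod_eval_diag (hΦ0 : ∀ i < n, 0 ≤ φ i) (hΦ1 : ∀ i < n, φ i ≤ 1)
    {N k : ℕ} (hk : k < N+1) (hn : N+1 ≤ n) (t : ℝ) :
    (∏ i : Fin (N+1), unifM (Gset φ k k ↑i t))
      = ∏ i ∈ Finset.range k, ENNReal.ofReal (1 - φ i) := by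
  rw [Fin.prod_univ_eq_prod_range (fun i => unifM (Gset φ k k i t)) (N+1)]
  rw [← Finset.prod_subset (Finset.range_subset_range.2 (le_of_lt hk))]
  · apply Finset.prod_congr rfl
    intro i hi
    rw [Finset.mem_range] at hi
    have : Gset φ k k i t = Set.Ioi (φ i) := by
      unfold Gset; rw [if_neg (by omega), if_pos hi, if_neg (by omega)]
    rw [this, unifM_Ioi (hΦ0 i (by omega)) (hΦ1 i (by omega))]
  · intro i _ hni
    rw [Finset.mem_range, not_lt] at hni
    have : Gset φ k k i t = Set.univ := by
      unfold Gset
      rcases eq_or_lt_of_le hni with h | h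
      · rw [if_pos h.symm]
      · rw [if_neg (by omega), if_neg (by omega), if_neg (by omega)]
    rw [this, measure_univ]

lemma prod_eval_gt (hΦ0 : ∀ i < n, 0 ≤ φ i) (hΦ1 : ∀ i < n, φ i ≤ 1)
    {N k j : ℕ} (hkj : k < j) (hj : j < N+1) (hn : N+1 ≤ n)
    {t : ℝ} (ht0 : 0 ≤ t) (ht1 : t ≤ 1) :
    (∏ i : Fin (N+1), unifM (Gset φ k j ↑i t))
      = ENNReal.ofReal t * ∏ i ∈ Finset.range k, ENNReal.ofReal (1 - φ i) := by
  rw [Fin.prod_univ_eq_prod_range (fun i => unifM (Gset φ k j i t)) (N+1)]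
  have hsub : insert j (Finset.range k) ⊆ Finset.range (N+1) := by
    intro i hi
    rcases Finset.mem_insert.1 hi with h | h
    · subst h; exact Finset.mem_range.2 hj
    · exact Finset.mem_range.2 ((Finset.mem_range.1 h).trans (by omega))
  rw [← Finset.prod_subset hsub]
  · rw [Finset.prod_insert (by simp [Finset.mem_range]; omega)]
    congr 1
    · have : Gset φ k j j t = Set.Iic t := by
        unfold Gset; rw [if_neg (by omega), if_neg (by omega), if_pos rfl]
      rw [this, unifM_Iic ht0 ht1]
    · apply Finset.prod_congr rfl
      intro i hi
      rw [Finset.mem_range] at hi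
      have : Gset φ k j i t = Set.Ioi (φ i) := by
        unfold Gset; rw [if_neg (by omega), if_pos hi, if_neg (by omega)]
      rw [this, unifM_Ioi (hΦ0 i (by omega)) (hΦ1 i (by omega))]
  · intro i _ hni
    simp only [Finset.mem_insert, Finset.mem_range, not_or, not_lt] at hni
    have : Gset φ k j i t = Set.univ := by
      unfold Gset
      rcases eq_or_lt_of_le hni.2 with h | h
      · rw [if_pos h.symm]
      · rw [if_neg (by omega), if_neg (by omega), if_neg hni.1]
    rw [this, measure_univ]

lemma prod_eval_lt (hΦ0 : ∀ i < n, 0 ≤ φ i) (hΦ1 : ∀ i < n, φ i ≤ 1)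
    {N k j : ℕ} (hjk : j < k) (hk : k < N+1) (hn : N+1 ≤ n)
    {t : ℝ} (ht1 : t ≤ 1) :
    (∏ i : Fin (N+1), unifM (Gset φ k j ↑i t))
      = ENNReal.ofReal (t - φ j)
        * ∏ i ∈ (Finset.range k).erase j, ENNReal.ofReal (1 - φ i) := by
  rw [Fin.prod_univ_eq_prod_range (fun i => unifM (Gset φ k j i t)) (N+1)]
  rw [← Finset.prod_subset (Finset.range_subset_range.2 (le_of_lt hk))]
  · rw [← Finset.mul_prod_erase (Finset.range k) _ (Finset.mem_range.2 hjk)]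
    congr 1
    · have : Gset φ k j j t = Set.Ioc (φ j) t := by
        unfold Gset; rw [if_neg (by omega), if_pos hjk, if_pos rfl]
      rw [this, unifM_Ioc (hΦ0 j (by omega)) ht1]
    · apply Finset.prod_congr rfl
      intro i hi
      rw [Finset.mem_erase, Finset.mem_range] at hi
      have : Gset φ k j i t = Set.Ioi (φ i) := by
        unfold Gset; rw [if_neg (by omega), if_pos hi.2, if_neg hi.1]
      rw [this, unifM_Ioi (hΦ0 i (by omega)) (hΦ1 i (by omega))]
  · intro i _ hni
    rw [Finset.mem_range, not_lt] at hni
    have : Gset φ k j i t = Set.univ := by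
      unfold Gset
      rcases eq_or_lt_of_le hni with h | h
      · rw [if_pos h.symm]
      · rw [if_neg (by omega), if_neg (by omega), if_neg (by omega)]
    rw [this, measure_univ]

end prods

section pvals
variable {φ : ℕ → ℝ} {n : ℕ}

lemma unifM_restrict_Iic {a : ℝ} (h0 : 0 ≤ a) (h1 : a ≤ 1) :
    unifM.restrict (Set.Iic a) = volume.restrict (Set.Icc 0 a) := by
  rw [unifM, Measure.restrict_restrict measurableSet_Iic]
  congr 1
  ext x; simp only [Set.mem_inter_iff, Set.mem_Iic, Set.mem_Icc]
  constructor
  · rintro ⟨h, h2, _⟩; exact ⟨h2, h⟩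
  · rintro ⟨h2, h⟩; exact ⟨h, h2, h.trans h1⟩

lemma Ppi_diag (hΦ0 : ∀ i < n, 0 ≤ φ i) (hΦ1 : ∀ i < n, φ i ≤ 1)
    {N k : ℕ} (hk : k < N+1) (hn : N+1 ≤ n) :
    Measure.pi (fun _ : Fin (N+1) => unifM) (Bset φ (N+1) k k hk)
      = ENNReal.ofReal (φ k)
        * ∏ i ∈ Finset.range k, ENNReal.ofReal (1 - φ i) := by
  rw [Bset_pi]
  rw [lintegral_congr (fun t => prod_eval_diag hΦ0 hΦ1 hk hn t)]
  rw [setLIntegral_const, unifM_Iic (hΦ0 k (by omega)) (hΦ1 k (by omega)), mul_comm]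

lemma Ppi_gt (hΦ0 : ∀ i < n, 0 ≤ φ i) (hΦ1 : ∀ i < n, φ i ≤ 1)
    {N k j : ℕ} (hkj : k < j) (hj : j < N+1) (hn : N+1 ≤ n) :
    Measure.pi (fun _ : Fin (N+1) => unifM) (Bset φ (N+1) k j (hkj.trans hj))
      = ENNReal.ofReal (φ k ^ 2 / 2)
        * ∏ i ∈ Finset.range k, ENNReal.ofReal (1 - φ i) := by
  have hk : k < N+1 := hkj.trans hj
  have h0 := hΦ0 k (by omega); have h1 := hΦ1 k (by omega)
  rw [Bset_pi, unifM_restrict_Iic h0 h1]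
  rw [setLIntegral_congr_fun measurableSet_Icc
    (fun t ht => prod_eval_gt hΦ0 hΦ1 hkj hj hn ht.1 (ht.2.trans h1))]
  rw [lintegral_mul_const _ (by exact measurable_id.ennreal_ofReal)]
  rw [Measure.restrict_congr_set Ioc_ae_eq_Icc.symm]
  have : (∫⁻ t in Set.Ioc 0 (φ k), ENNReal.ofReal t)
      = ENNReal.ofReal (φ k ^ 2 / 2) := by
    have := lint_linear (a := 0) (b := φ k) h0
    simpa using this
  rw [this]

lemma Ppi_lt (hΦ0 : ∀ i < n, 0 ≤ φ i) (hΦ1 : ∀ i < n, φ i ≤ 1)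
    {N k j : ℕ} (hjk : j < k) (hk : k < N+1) (hn : N+1 ≤ n)
    (hmono : φ j ≤ φ k) :
    Measure.pi (fun _ : Fin (N+1) => unifM) (Bset φ (N+1) k j hk)
      = ENNReal.ofReal ((φ k - φ j) ^ 2 / 2)
        * ∏ i ∈ (Finset.range k).erase j, ENNReal.ofReal (1 - φ i) := by
  have h0k := hΦ0 k (by omega); have h1k := hΦ1 k (by omega)
  have h0j := hΦ0 j (by omega)
  rw [Bset_pi, unifM_restrict_Iic h0k h1k]
  rw [setLIntegral_congr_fun measurableSet_Icc
    (fun t ht => prod_eval_lt hΦ0 hΦ1 hjk hk hn (ht.2.trans h1k))]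
  rw [lintegral_mul_const _ (by exact (measurable_id.sub_const _).ennreal_ofReal)]
  rw [Measure.restrict_congr_set Ioc_ae_eq_Icc.symm]
  have hsplit : Set.Ioc (0:ℝ) (φ k) = Set.Ioc 0 (φ j) ∪ Set.Ioc (φ j) (φ k) :=
    (Set.Ioc_union_Ioc_eq_Ioc h0j hmono).symm
  rw [hsplit, lintegral_union measurableSet_Ioc (Set.Ioc_disjoint_Ioc_of_le le_rfl)]
  have hz : (∫⁻ t in Set.Ioc (0:ℝ) (φ j), ENNReal.ofReal (t - φ j)) = 0 := by
    rw [setLIntegral_congr_fun measurableSet_Ioc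
      (fun t ht => ?_), lintegral_zero]
    rw [ENNReal.ofReal_eq_zero]
    linarith [ht.2]
  rw [hz, zero_add, lint_linear hmono]

end pvals



def Eev {Ω : Type*} (X : ℕ → Ω → ℝ) (φ : ℕ → ℝ) (k j : ℕ) : Set Ω :=
  Aev X φ k ∩ {ω | X j ω ≤ X k ω}

section decomp
variable {Ω : Type*} [MeasurableSpace Ω] (P : Measure Ω) [IsProbabilityMeasure P]
  (X : ℕ → Ω → ℝ) (φ : ℕ → ℝ) (n : ℕ)

lemma Aev_meas (hmeas : ∀ i, Measurable (X i)) (k : ℕ) :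
    MeasurableSet (Aev X φ k) := by
  have : Aev X φ k = X k ⁻¹' (Set.Iic (φ k)) ∩ ⋂ (i : ℕ) (_ : i < k), X i ⁻¹' (Set.Ioi (φ i)) := by
    ext ω; simp [Aev]
  rw [this]
  exact ((hmeas k) measurableSet_Iic).inter
    (MeasurableSet.iInter fun i => MeasurableSet.iInter fun _ => (hmeas i) measurableSet_Ioi)

lemma Eev_meas (hmeas : ∀ i, Measurable (X i)) (k j : ℕ) :
    MeasurableSet (Eev X φ k j) :=
  (Aev_meas X φ hmeas k).inter (measurableSet_le (hmeas j) (hmeas k))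

lemma finalRank_ae_eq (hmeas : ∀ i, Measurable (X i))
    (hunif : ∀ i, Measure.map (X i) P = unifM)
    (hn : 0 < n) (hlast : φ (n-1) = 1) :
    ∫ ω, finalRank X n (mlRule X n φ) ω ∂P
      = ∑ k ∈ Finset.range n, ∑ j ∈ Finset.range n, (P (Eev X φ k j)).toReal := by
  set F : Ω → ℝ := fun ω => ∑ k ∈ Finset.range n, ∑ j ∈ Finset.range n,
    Set.indicator (Eev X φ k j) (fun _ => (1:ℝ)) ω with hF
  have hnull : P ((⋃ k ∈ Finset.range n, Aev X φ k)ᶜ) = 0 := by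
    apply measure_mono_null (Aev_compl_subset X φ n hn)
    have : {ω | φ (n-1) < X (n-1) ω} = X (n-1) ⁻¹' (Set.Ioi (φ (n-1))) := rfl
    rw [this, ← Measure.map_apply (hmeas _) measurableSet_Ioi, hunif, hlast]
    rw [unifM, Measure.restrict_apply measurableSet_Ioi]
    have : Set.Ioi (1:ℝ) ∩ Set.Icc 0 1 = ∅ := by
      ext x; simp only [Set.mem_inter_iff, Set.mem_Ioi, Set.mem_Icc, Set.mem_empty_iff_false,
        iff_false, not_and]
      intro h1 h2; linarith
    rw [this]; simp
  have hae : finalRank X n (mlRule X n φ) =ᵐ[P] F := by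
    have hmem : (⋃ k ∈ Finset.range n, Aev X φ k) ∈ ae P := by
      rw [mem_ae_iff]; exact hnull
    filter_upwards [hmem] with ω hω
    simp only [Set.mem_iUnion, Finset.mem_range] at hω
    obtain ⟨k, hk, hωk⟩ := hω
    have hτ : mlRule X n φ ω = k := mlRule_eq_on_Aev X n φ hk hωk
    rw [finalRank, hτ, hF]
    show _ = ∑ k' ∈ Finset.range n, ∑ j ∈ Finset.range n,
      Set.indicator (Eev X φ k' j) (fun _ => (1:ℝ)) ω
    rw [Finset.sum_comm]
    apply Finset.sum_congr rfl
    intro j _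
    rw [Finset.sum_eq_single k]
    · by_cases h : X j ω ≤ X k ω
      · rw [if_pos h, Set.indicator_of_mem (show ω ∈ Eev X φ k j from ⟨hωk, h⟩)]
      · rw [if_neg h, Set.indicator_of_notMem (by intro hc; exact h hc.2)]
    · intro k' _ hk'
      apply Set.indicator_of_notMem
      intro hc
      rcases Nat.lt_or_ge k' k with h | h
      · have := Aev_disjoint X φ h
        exact absurd (Set.mem_inter hc.1 hωk) (by rw [this]; exact id)
      · have hlt : k < k' := lt_of_le_of_ne h (Ne.symm hk')
        have := Aev_disjoint X φ hlt
        exact absurd (Set.mem_inter hωk hc.1) (by rw [this]; exact id)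
    · intro h
      exact absurd (Finset.mem_range.2 hk) h
  rw [integral_congr_ae hae, hF]
  rw [integral_finset_sum _ (fun k _ => integrable_finset_sum _ (fun j _ =>
    (integrable_const (1:ℝ)).indicator (Eev_meas X φ hmeas k j)))]
  apply Finset.sum_congr rfl
  intro k _
  rw [integral_finset_sum _ (fun j _ =>
    (integrable_const (1:ℝ)).indicator (Eev_meas X φ hmeas k j))]
  apply Finset.sum_congr rfl
  intro j _
  rw [integral_indicator_const (1:ℝ) (Eev_meas X φ hmeas k j)]
  simp
  rfl

end decomp



section master
variable {Ω : Type*} [MeasurableSpace Ω] (P : Measure Ω) [IsProbabilityMeasure P]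
  (X : ℕ → Ω → ℝ) (φ : ℕ → ℝ)

lemma P_Eev_eq_pi (hmeas : ∀ i, Measurable (X i))
    (hindep : iIndepFun X P)
    (hunif : ∀ i, Measure.map (X i) P = unifM)
    {N k j : ℕ} (hk : k < N+1) (hj : j < N+1) :
    P (Eev X φ k j) = Measure.pi (fun _ : Fin (N+1) => unifM) (Bset φ (N+1) k j hk) := by
  have hYm : Measurable (fun ω (i : Fin (N+1)) => X i ω) :=
    measurable_pi_lambda _ (fun i => hmeas i)
  rw [← map_eq_pi P X hmeas hindep hunif (N+1),
    Measure.map_apply hYm (Bset_meas φ (N+1) k j hk),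
    Bset_preimage X φ (N+1) k j hk hj]
  rfl

lemma toReal_prod_ofReal {f : ℕ → ℝ} (s : Finset ℕ) (hf : ∀ i ∈ s, 0 ≤ f i) :
    (∏ i ∈ s, ENNReal.ofReal (f i)).toReal = ∏ i ∈ s, f i := by
  rw [ENNReal.toReal_prod]
  exact Finset.prod_congr rfl (fun i hi => ENNReal.toReal_ofReal (hf i hi))

lemma master_formula (hmeas : ∀ i, Measurable (X i))
    (hindep : iIndepFun X P)
    (hunif : ∀ i, Measure.map (X i) P = unifM)
    {n : ℕ} (hn : 0 < n)
    (hΦ0 : ∀ i < n, 0 ≤ φ i) (hΦ1 : ∀ i < n, φ i ≤ 1)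
    (hmono : ∀ i j, i ≤ j → j < n → φ i ≤ φ j)
    (hlast : φ (n-1) = 1) :
    ∫ ω, finalRank X n (mlRule X n φ) ω ∂P
      = ∑ k ∈ Finset.range n,
          ((φ k + ((n - 1 - k : ℕ) : ℝ) * (φ k ^ 2 / 2)) * ∏ i ∈ Finset.range k, (1 - φ i)
            + ∑ j ∈ Finset.range k,
                ((φ k - φ j) ^ 2 / 2) * ∏ i ∈ (Finset.range k).erase j, (1 - φ i)) := by
  obtain ⟨N, rfl⟩ : ∃ N, n = N + 1 := ⟨n - 1, by omega⟩
  have h1φ : ∀ i < N+1, 0 ≤ 1 - φ i := fun i hi => by linarith [hΦ1 i hi]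
  rw [finalRank_ae_eq P X φ (N+1) hmeas hunif hn hlast]
  apply Finset.sum_congr rfl
  intro k hk
  rw [Finset.mem_range] at hk
  -- split the j-sum
  have hsplit : Finset.range (N+1) = Finset.range (k+1) ∪ Finset.Ico (k+1) (N+1) := by
    rw [Finset.range_eq_Ico, ← Finset.Ico_union_Ico_eq_Ico (by omega : 0 ≤ k+1) (by omega : k+1 ≤ N+1), Finset.range_eq_Ico]
  rw [hsplit, Finset.sum_union (by
      simp only [Finset.disjoint_left, Finset.mem_range, Finset.mem_Ico]
      intro a ha; omega)]
  rw [Finset.sum_range_succ]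
  -- diagonal term
  have hdiag : (P (Eev X φ k k)).toReal = φ k * ∏ i ∈ Finset.range k, (1 - φ i) := by
    rw [P_Eev_eq_pi P X φ hmeas hindep hunif hk hk,
      Ppi_diag hΦ0 hΦ1 hk (le_refl (N+1)), ENNReal.toReal_mul,
      ENNReal.toReal_ofReal (hΦ0 k hk),
      toReal_prod_ofReal _ (fun i hi => h1φ i (by simp at hi; omega))]
  -- past terms
  have hpast : ∀ j ∈ Finset.range k, (P (Eev X φ k j)).toReal
      = ((φ k - φ j) ^ 2 / 2) * ∏ i ∈ (Finset.range k).erase j, (1 - φ i) := by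
    intro j hj
    rw [Finset.mem_range] at hj
    rw [P_Eev_eq_pi P X φ hmeas hindep hunif hk (hj.trans hk),
      Ppi_lt hΦ0 hΦ1 hj hk (le_refl (N+1)) (hmono j k (le_of_lt hj) hk),
      ENNReal.toReal_mul, ENNReal.toReal_ofReal (by positivity),
      toReal_prod_ofReal _ (fun i hi => h1φ i (by simp at hi; omega))]
  -- future terms
  have hfut : ∀ j ∈ Finset.Ico (k+1) (N+1), (P (Eev X φ k j)).toReal
      = (φ k ^ 2 / 2) * ∏ i ∈ Finset.range k, (1 - φ i) := by
    intro j hj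
    rw [Finset.mem_Ico] at hj
    have hkj : k < j := hj.1
    have hjN : j < N+1 := hj.2
    rw [P_Eev_eq_pi P X φ hmeas hindep hunif hk hjN]
    have hBB : Bset φ (N+1) k j hk = Bset φ (N+1) k j (hkj.trans hjN) := rfl
    rw [hBB, Ppi_gt hΦ0 hΦ1 hkj hjN (le_refl (N+1)), ENNReal.toReal_mul,
      ENNReal.toReal_ofReal (by positivity),
      toReal_prod_ofReal _ (fun i hi => h1φ i (by simp at hi; omega))]
  rw [Finset.sum_congr rfl hpast, hdiag, Finset.sum_congr rfl hfut,
    Finset.sum_const, Nat.card_Ico]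
  have hcard : (N + 1 - (k+1) : ℕ) = (N + 1 - 1 - k : ℕ) := by omega
  rw [hcard, nsmul_eq_mul]
  ring
end master



section algebra
open Finset
variable {n : ℕ}

lemma sumId (m : ℕ) : ∑ i ∈ range m, (i:ℝ) = m*(m-1)/2 := by
  induction m with
  | zero => simp
  | succ m ih => rw [Finset.sum_range_succ, ih]; push_cast; ring

lemma sumSq (m : ℕ) : ∑ d ∈ range m, ((d:ℝ)+1)^2 = (m:ℝ)*((m:ℝ)+1)*(2*(m:ℝ)+1)/6 := by
  induction m with
  | zero => simp
  | succ m ih => rw [Finset.sum_range_succ, ih]; push_cast; ring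

lemma W_eq (hn : 1 ≤ n) : ∀ k, k ≤ n →
    ∏ i ∈ range k, (1 - 2/((n:ℝ)+1-i)) = ((n:ℝ)-k)*((n:ℝ)-k+1)/((n:ℝ)*((n:ℝ)+1)) := by
  have hnr : (1:ℝ) ≤ (n:ℝ) := by exact_mod_cast hn
  intro k
  induction k with
  | zero =>
    intro _
    simp only [Finset.range_zero, Finset.prod_empty, Nat.cast_zero, sub_zero]
    field_simp
  | succ k ih =>
    intro hk1
    have hk : k ≤ n := by omega
    have hkr : (k:ℝ) ≤ (n:ℝ) - 1 := by
      have : (k:ℝ) + 1 ≤ (n:ℝ) := by exact_mod_cast hk1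
      linarith
    have hd : (2:ℝ) ≤ (n:ℝ)+1-k := by linarith
    rw [Finset.prod_range_succ, ih hk]
    have h1 : (n:ℝ) ≠ 0 := by linarith
    have h2 : (n:ℝ)+1 ≠ 0 := by linarith
    have h3 : (n:ℝ)+1-k ≠ 0 := by linarith
    push_cast
    field_simp
    ring

lemma W_nonneg (hn : 1 ≤ n) (k : ℕ) (hk : k ≤ n) :
    0 ≤ ∏ i ∈ range k, (1 - 2/((n:ℝ)+1-i)) := by
  rw [W_eq hn k hk]
  have hkr : (k:ℝ) ≤ (n:ℝ) := by exact_mod_cast hk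
  have : (0:ℝ) < n := by exact_mod_cast hn
  have h1 : 0 ≤ (n:ℝ)-k := by linarith
  positivity

set_option maxHeartbeats 2000000 in
lemma main_bound (hn : 1 ≤ n) :
    (∑ k ∈ Finset.range n,
      (((2/((n:ℝ)+1-k)) + ((n - 1 - k : ℕ) : ℝ) * ((2/((n:ℝ)+1-k)) ^ 2 / 2))
          * ∏ i ∈ Finset.range k, (1 - 2/((n:ℝ)+1-i))
        + ∑ j ∈ Finset.range k,
            ((2/((n:ℝ)+1-k) - 2/((n:ℝ)+1-j)) ^ 2 / 2)
              * ∏ i ∈ (Finset.range k).erase j, (1 - 2/((n:ℝ)+1-i))))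
      ≤ 7*(n:ℝ)/(3*((n:ℝ)+1)) := by
  have hnr : (1:ℝ) ≤ (n:ℝ) := by exact_mod_cast hn
  have hn0 : (0:ℝ) < (n:ℝ) := by linarith
  have hn1 : (0:ℝ) < (n:ℝ)+1 := by linarith
  set nr := (n:ℝ) with hnrdef
  set φ : ℕ → ℝ := fun j => 2/(nr+1-j) with hφ
  set W : ℕ → ℝ := fun k => ∏ i ∈ Finset.range k, (1 - φ i) with hW
  -- the A-part bound, per k
  have hA : ∀ k ∈ Finset.range n,
      (φ k + ((n - 1 - k : ℕ) : ℝ) * (φ k ^ 2 / 2)) * W k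
        ≤ (2*(nr-k) + 2*((n - 1 - k : ℕ) : ℝ))/(nr*(nr+1)) := by
    intro k hk
    rw [Finset.mem_range] at hk
    have hkr : (k:ℝ) ≤ nr - 1 := by
      have h' : k + 1 ≤ n := hk
      have : ((k+1:ℕ):ℝ) ≤ ((n:ℕ):ℝ) := by exact_mod_cast h'
      push_cast at this
      rw [hnrdef]
      linarith
    have hd : (2:ℝ) ≤ nr+1-k := by linarith
    have hd0 : (0:ℝ) < nr+1-k := by linarith
    have hm : (0:ℝ) ≤ ((n - 1 - k : ℕ) : ℝ) := Nat.cast_nonneg _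
    have key : (φ k + ((n - 1 - k : ℕ) : ℝ) * (φ k ^ 2 / 2)) * W k
        = (2*(nr-k) + 2*((n - 1 - k : ℕ) : ℝ) * ((nr-k)/(nr+1-k)))/(nr*(nr+1)) := by
      rw [hW, hφ]
      simp only
      rw [W_eq hn k (le_of_lt hk)]
      field_simp
      ring
    rw [key]
    have hfrac : (nr-↑k)/(nr+1-↑k) ≤ 1 := div_le_one_of_le₀ (by linarith) (by linarith)
    have h2 : 2*((n-1-k:ℕ):ℝ) * ((nr-↑k)/(nr+1-↑k)) ≤ 2*((n-1-k:ℕ):ℝ) := by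
      nth_rewrite 2 [← mul_one (2*((n-1-k:ℕ):ℝ))]
      exact mul_le_mul_of_nonneg_left hfrac (by positivity)
    exact (div_le_div_iff_of_pos_right (by positivity)).2 (by linarith)
  set C : ℕ → ℕ → ℝ := fun k j => ((φ k - φ j) ^ 2 / 2) * ∏ i ∈ (Finset.range k).erase j, (1 - φ i) with hC
  have hsplit : (∑ k ∈ Finset.range n,
      ((φ k + ((n - 1 - k : ℕ) : ℝ) * (φ k ^ 2 / 2)) * W k + ∑ j ∈ Finset.range k, C k j))
      = (∑ k ∈ Finset.range n, (φ k + ((n - 1 - k : ℕ) : ℝ) * (φ k ^ 2 / 2)) * W k)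
        + ∑ k ∈ Finset.range n, ∑ j ∈ Finset.range k, C k j := Finset.sum_add_distrib
  have hsum1 : ∑ k ∈ Finset.range n, (nr - (k:ℝ)) = nr*(nr+1)/2 := by
    rw [Finset.sum_sub_distrib, Finset.sum_const, Finset.card_range, sumId, nsmul_eq_mul, hnrdef]
    ring
  have hsum2 : ∑ k ∈ Finset.range n, ((n - 1 - k : ℕ) : ℝ) = nr*(nr-1)/2 := by
    have := Finset.sum_range_reflect (fun i : ℕ => (i:ℝ)) n
    rw [this, sumId, hnrdef]
  have hSA : (∑ k ∈ Finset.range n, (φ k + ((n - 1 - k : ℕ) : ℝ) * (φ k ^ 2 / 2)) * W k)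
      ≤ (nr*(nr+1) + nr*(nr-1))/(nr*(nr+1)) := by
    calc (∑ k ∈ Finset.range n, (φ k + ((n - 1 - k : ℕ) : ℝ) * (φ k ^ 2 / 2)) * W k)
        ≤ ∑ k ∈ Finset.range n, (2*(nr-k) + 2*((n - 1 - k : ℕ) : ℝ))/(nr*(nr+1)) :=
          Finset.sum_le_sum hA
      _ = (∑ k ∈ Finset.range n, (2*(nr-k) + 2*((n - 1 - k : ℕ) : ℝ)))/(nr*(nr+1)) := by
          rw [Finset.sum_div]
      _ = (nr*(nr+1) + nr*(nr-1))/(nr*(nr+1)) := by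
          rw [Finset.sum_add_distrib, ← Finset.mul_sum, ← Finset.mul_sum, hsum1, hsum2]
          ring_nf
  -- cross terms
  have hswap : (∑ k ∈ Finset.range n, ∑ j ∈ Finset.range k, C k j)
      = ∑ j ∈ Finset.range n, ∑ k ∈ Finset.Ico (j+1) n, C k j := by
    simp only [Finset.range_eq_Ico]
    exact (Finset.sum_Ico_Ico_comm' 0 n (fun j k => C k j)).symm
  have hCb : ∀ j ∈ Finset.range n, (∑ k ∈ Finset.Ico (j+1) n, C k j)
      ≤ (2*(nr-1-j)+1)/(3*nr*(nr+1)) := by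
    intro j hj
    rw [Finset.mem_range] at hj
    have hjr : (j:ℝ) ≤ nr - 1 := by
      have h' : j + 1 ≤ n := hj
      have : ((j+1:ℕ):ℝ) ≤ ((n:ℕ):ℝ) := by exact_mod_cast h'
      push_cast at this
      rw [hnrdef]
      linarith
    by_cases hj2 : j + 1 < n
    · have hjr2 : (j:ℝ) ≤ nr - 2 := by
        have h' : j + 2 ≤ n := hj2
        have : ((j+2:ℕ):ℝ) ≤ ((n:ℕ):ℝ) := by exact_mod_cast h'
        push_cast at this
        rw [hnrdef]
        linarith
      set Dr : ℝ := nr - 1 - j with hDr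
      have hDr1 : 1 ≤ Dr := by rw [hDr]; linarith
      have hβpos : (0:ℝ) < (nr-1-(j:ℝ))*(nr+1-(j:ℝ))*nr*(nr+1) := by
        rw [← hDr]
        have : nr+1-(j:ℝ) = Dr + 2 := by rw [hDr]; ring
        rw [this]
        positivity
      have hterm : ∀ k ∈ Finset.Ico (j+1) n, C k j
          ≤ (2/((nr-1-j)*(nr+1-j)*nr*(nr+1))) * ((k:ℝ)-j)^2 := by
        intro k hk
        rw [Finset.mem_Ico] at hk
        have hjk : j < k := hk.1
        have hkn : k < n := hk.2
        have hkr : (k:ℝ) ≤ nr - 1 := by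
          have h' : k + 1 ≤ n := hkn
          have : ((k+1:ℕ):ℝ) ≤ ((n:ℕ):ℝ) := by exact_mod_cast h'
          push_cast at this
          rw [hnrdef]; linarith
        have hjkr : (j:ℝ) < (k:ℝ) := by exact_mod_cast hjk
        have hWerase : (1 - φ j) * ∏ i ∈ (Finset.range k).erase j, (1 - φ i) = W k := by
          rw [hW]
          exact Finset.mul_prod_erase (Finset.range k) (fun i => 1 - φ i) (Finset.mem_range.2 hjk)
        have hφj : 1 - φ j = (nr-1-j)/(nr+1-j) := by
          rw [hφ]
          have : nr+1-(j:ℝ) ≠ 0 := by linarith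
          field_simp
          ring
        have hφjpos : 0 < 1 - φ j := by
          rw [hφj]
          apply div_pos <;> linarith
        have hWer : ∏ i ∈ (Finset.range k).erase j, (1 - φ i) = W k / (1 - φ j) := by
          rw [eq_div_iff (ne_of_gt hφjpos), mul_comm]
          exact hWerase
        have hkey : C k j = ((2/((nr-1-j)*(nr+1-j)*nr*(nr+1))) * ((k:ℝ)-j)^2)
            * ((nr-k)/(nr+1-k)) := by
          rw [hC]
          simp only
          rw [hWer, hφj, hW]
          simp only
          rw [W_eq hn k (le_of_lt hkn), hφ]
          simp only
          have h1 : nr+1-(k:ℝ) ≠ 0 := by linarith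
          have h2 : nr+1-(j:ℝ) ≠ 0 := by linarith
          have h3 : nr-1-(j:ℝ) ≠ 0 := by linarith
          have h4 : nr ≠ 0 := by linarith
          have h5 : nr+1 ≠ 0 := by linarith
          field_simp
          ring
        rw [hkey]
        have hfrac : (nr-↑k)/(nr+1-↑k) ≤ 1 := div_le_one_of_le₀ (by linarith) (by linarith)
        have hnng : 0 ≤ (2/((nr-1-↑j)*(nr+1-↑j)*nr*(nr+1))) * ((k:ℝ)-↑j)^2 := by
          apply mul_nonneg (by positivity) (by positivity)
        exact mul_le_of_le_one_right hnng hfrac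
      have hsumsq : ∑ k ∈ Finset.Ico (j+1) n, ((k:ℝ)-j)^2
          = Dr*(Dr+1)*(2*Dr+1)/6 := by
        rw [Finset.sum_Ico_eq_sum_range]
        have hre : ∀ d ∈ Finset.range (n - (j+1)), (((j+1+d:ℕ):ℝ)-(j:ℝ))^2 = ((d:ℝ)+1)^2 := by
          intro d _
          push_cast
          ring_nf
        rw [Finset.sum_congr rfl hre, sumSq]
        have hcast : ((n - (j+1) : ℕ):ℝ) = Dr := by
          rw [Nat.cast_sub hj, hDr, hnrdef]
          push_cast
          ring
        rw [hcast]
      calc (∑ k ∈ Finset.Ico (j+1) n, C k j)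
          ≤ ∑ k ∈ Finset.Ico (j+1) n, (2/((nr-1-j)*(nr+1-j)*nr*(nr+1))) * ((k:ℝ)-j)^2 :=
            Finset.sum_le_sum hterm
        _ = (2/((nr-1-j)*(nr+1-j)*nr*(nr+1))) * (Dr*(Dr+1)*(2*Dr+1)/6) := by
            rw [← Finset.mul_sum, hsumsq]
        _ ≤ (2*(nr-1-j)+1)/(3*nr*(nr+1)) := by
            have hje : nr+1-(j:ℝ) = Dr + 2 := by rw [hDr]; ring
            have hje2 : nr-1-(j:ℝ) = Dr := by rw [hDr]
            rw [hje, hje2]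
            have hid : (2/(Dr*(Dr+2)*nr*(nr+1))) * (Dr*(Dr+1)*(2*Dr+1)/6)
                = ((2*Dr+1)/(3*nr*(nr+1))) * ((Dr+1)/(Dr+2)) := by
              have hD0 : Dr ≠ 0 := by linarith
              have hD2 : Dr + 2 ≠ 0 := by linarith
              have h4 : nr ≠ 0 := by linarith
              have h5 : nr+1 ≠ 0 := by linarith
              field_simp
              ring
            rw [hid]
            have hfrac : (Dr+1)/(Dr+2) ≤ 1 := div_le_one_of_le₀ (by linarith) (by linarith)
            have hpos : 0 ≤ (2*Dr+1)/(3*nr*(nr+1)) := by positivity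
            exact mul_le_of_le_one_right hpos hfrac
    · have hempty : Finset.Ico (j+1) n = ∅ := Finset.Ico_eq_empty (by omega)
      rw [hempty, Finset.sum_empty]
      apply div_nonneg (by linarith) (by positivity)
  have hSC : (∑ k ∈ Finset.range n, ∑ j ∈ Finset.range k, C k j)
      ≤ nr*nr/(3*nr*(nr+1)) := by
    rw [hswap]
    calc (∑ j ∈ Finset.range n, ∑ k ∈ Finset.Ico (j+1) n, C k j)
        ≤ ∑ j ∈ Finset.range n, (2*(nr-1-j)+1)/(3*nr*(nr+1)) := Finset.sum_le_sum hCb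
      _ = (∑ j ∈ Finset.range n, (2*(nr-1-j)+1))/(3*nr*(nr+1)) := by rw [Finset.sum_div]
      _ = nr*nr/(3*nr*(nr+1)) := by
          congr 1
          have : ∀ j ∈ Finset.range n, 2*(nr-1-(j:ℝ))+1 = 2*(nr-(j:ℝ)) - 1 := by
            intro j _; ring
          rw [Finset.sum_congr rfl this, Finset.sum_sub_distrib, ← Finset.mul_sum, hsum1,
            Finset.sum_const, Finset.card_range, nsmul_eq_mul, hnrdef]
          ring
  rw [hsplit]
  have hfinal : (nr*(nr+1) + nr*(nr-1))/(nr*(nr+1)) + nr*nr/(3*nr*(nr+1))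
      = 7*nr/(3*(nr+1)) := by
    have h4 : nr ≠ 0 := by linarith
    have h5 : nr+1 ≠ 0 := by linarith
    field_simp
    ring
  linarith [hSA, hSC]
end algebra


section core
variable {Ω : Type*} [MeasurableSpace Ω] (P : Measure Ω) [IsProbabilityMeasure P]
  (X : ℕ → Ω → ℝ)

lemma core_bound (hmeas : ∀ i, Measurable (X i))
    (hindep : iIndepFun X P)
    (hunif : ∀ i, Measure.map (X i) P = volume.restrict (Set.Icc (0 : ℝ) 1))
    {n : ℕ} (hn : 1 ≤ n) :
    ∫ ω, finalRank X n (mlRule X n (fun j => 2 / ((n : ℝ) - (j : ℝ) - 1 + 2))) ω ∂P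
      < 2.34 := by
  have hunif' : ∀ i, Measure.map (X i) P = unifM := fun i => hunif i
  have hnr : (1:ℝ) ≤ (n:ℝ) := by exact_mod_cast hn
  have hfun : (fun j : ℕ => (2:ℝ) / ((n : ℝ) - (j : ℝ) - 1 + 2))
      = (fun j : ℕ => 2 / ((n:ℝ) + 1 - j)) := by
    funext j
    congr 1
    ring
  rw [hfun]
  set φ : ℕ → ℝ := fun j => 2 / ((n:ℝ) + 1 - j) with hφ
  have hcast : ∀ i : ℕ, i < n → (i:ℝ) ≤ (n:ℝ) - 1 := by
    intro i hi
    have h' : i + 1 ≤ n := hi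
    have : ((i+1:ℕ):ℝ) ≤ ((n:ℕ):ℝ) := by exact_mod_cast h'
    push_cast at this
    linarith
  have hΦ0 : ∀ i < n, 0 ≤ φ i := by
    intro i hi
    have := hcast i hi
    apply div_nonneg (by norm_num) (by linarith)
  have hΦ1 : ∀ i < n, φ i ≤ 1 := by
    intro i hi
    have := hcast i hi
    rw [hφ]
    simp only
    rw [div_le_one (by linarith)]
    linarith
  have hmono : ∀ i j, i ≤ j → j < n → φ i ≤ φ j := by
    intro i j hij hj
    have hjr := hcast j hj
    have hij' : (i:ℝ) ≤ (j:ℝ) := by exact_mod_cast hij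
    apply div_le_div_of_nonneg_left (by norm_num) (by linarith) (by linarith)
  have hlast : φ (n-1) = 1 := by
    rw [hφ]
    simp only
    rw [Nat.cast_sub hn]
    push_cast
    norm_num
  rw [master_formula P X φ hmeas hindep hunif' (by omega) hΦ0 hΦ1 hmono hlast]
  have hb := main_bound (n := n) hn
  have hlt : 7*(n:ℝ)/(3*((n:ℝ)+1)) < 2.34 := by
    rw [div_lt_iff₀ (by linarith)]
    norm_num
    linarith
  calc _ ≤ 7*(n:ℝ)/(3*((n:ℝ)+1)) := hb
    _ < 2.34 := hlt
end core

/-- The limiting memoryless value satisfies `ṽ = lim ṽ n ≤ 2.34`; in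
particular, for all sufficiently large `n` the memoryless threshold rule with thresholds
`φ j = c / (n - j + c)` (`1`-based; here `0`-based, so `φ j = c / (n - j - 1 + c)`) for a
suitable constant `c > 1` achieves an expected final rank below `2.34`. -/

theorem mlValue_limit_le
    {Ω : Type*} [MeasurableSpace Ω] (P : Measure Ω) [IsProbabilityMeasure P]
    (X : ℕ → Ω → ℝ)
    (hmeas : ∀ i, Measurable (X i))
    (hindep : iIndepFun X P)
    (hunif : ∀ i, Measure.map (X i) P = volume.restrict (Set.Icc (0 : ℝ) 1)) :
    (∀ w : ℝ, Tendsto (fun n => mlValue P X n) atTop (nhds w) → w ≤ 2.34) ∧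
    ∃ c : ℝ, 1 < c ∧ ∀ᶠ n : ℕ in atTop,
      ∫ ω, finalRank X n
        (mlRule X n (fun j => c / ((n : ℝ) - (j : ℝ) - 1 + c))) ω ∂P < 2.34 := by
  have hcore : ∀ n : ℕ, 1 ≤ n →
      ∫ ω, finalRank X n (mlRule X n (fun j => 2 / ((n : ℝ) - (j : ℝ) - 1 + 2))) ω ∂P
        < 2.34 := fun n hn => core_bound P X hmeas hindep hunif hn
  constructor
  · intro w hw
    apply le_of_tendsto hw
    rw [Filter.eventually_atTop]
    refine ⟨1, fun n hn => ?_⟩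
    have hle : mlValue P X n
        ≤ ∫ ω, finalRank X n (mlRule X n (fun j => 2 / ((n : ℝ) - (j : ℝ) - 1 + 2))) ω ∂P := by
      apply csInf_le
      · refine ⟨0, fun r hr => ?_⟩
        obtain ⟨ψ, _, _, rfl⟩ := hr
        apply integral_nonneg
        intro ω
        apply Finset.sum_nonneg
        intro j _
        split <;> norm_num
      · refine ⟨fun j => 2 / ((n : ℝ) - (j : ℝ) - 1 + 2), ?_, ?_, rfl⟩
        · intro j hj
          have h' : j + 1 ≤ n := hj
          have hc : ((j+1:ℕ):ℝ) ≤ ((n:ℕ):ℝ) := by exact_mod_cast h'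
          push_cast at hc
          constructor
          · apply div_nonneg (by norm_num) (by linarith)
          · rw [div_le_one (by linarith)]
            linarith
        · show (2:ℝ) / ((n:ℝ) - ((n-1:ℕ):ℝ) - 1 + 2) = 1
          rw [Nat.cast_sub hn]
          push_cast
          norm_num
    linarith [hcore n hn]
  · refine ⟨2, by norm_num, ?_⟩
    rw [Filter.eventually_atTop]
    exact ⟨1, fun n hn => hcore n hn⟩
end

section
/- The sums S_n = ∑_{m=3}^{⌊n/2⌋} 1/(log(m) · log(n−m)) tend to infinity as n → ∞. -/
open Filter

lemma aux_tendsto : Tendsto (fun n : ℕ => (n : ℝ) / 8 / Real.log n ^ 2) atTop atTop := by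
  have h := Real.tendsto_pow_log_div_mul_add_atTop (1/8) 0 2 (by norm_num)
  have hpos : ∀ᶠ x : ℝ in atTop,
      Real.log x ^ 2 / (1/8 * x + 0) ∈ Set.Ioi (0:ℝ) := by
    filter_upwards [eventually_ge_atTop (3:ℝ)] with x hx
    have hlog : 0 < Real.log x := Real.log_pos (by linarith)
    have hden : 0 < 1/8 * x + 0 := by linarith
    exact div_pos (by positivity) hden
  have h2 := tendsto_nhdsWithin_of_tendsto_nhds_of_eventually_within _ h hpos
  have h3 := h2.inv_tendsto_nhdsGT_zero
  have h4 : Tendsto (fun x : ℝ => x / 8 / Real.log x ^ 2) atTop atTop := by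
    refine h3.congr fun x => ?_
    simp only [Pi.inv_apply, inv_div]
    ring
  exact h4.comp tendsto_natCast_atTop_atTop

/-- The sums `S n = ∑_{m=3}^{⌊n/2⌋} 1/(log m · log (n-m))` tend to
infinity as `n → ∞`. -/
theorem goldbach_heuristic_sum_tendsto_atTop :
    Tendsto (fun n : ℕ =>
        ∑ m ∈ Finset.Icc 3 (n / 2), 1 / (Real.log m * Real.log ((n : ℝ) - (m : ℝ))))
      atTop atTop := by
  refine tendsto_atTop_mono' atTop ?_ aux_tendsto
  filter_upwards [eventually_ge_atTop 16] with n hn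
  have hnR : (16:ℝ) ≤ n := by exact_mod_cast hn
  have he : Real.exp 1 < 3 := by
    have := Real.exp_one_lt_d9
    linarith
  have hlog3 : 1 < Real.log 3 := by
    rw [Real.lt_log_iff_exp_lt (by norm_num)]
    exact he
  have hlogn : 1 < Real.log n := by
    have : Real.log 3 ≤ Real.log n := Real.log_le_log (by norm_num) (by linarith)
    linarith
  -- each term is at least 1 / (log n)^2
  have hterm : ∀ m ∈ Finset.Icc 3 (n / 2),
      1 / Real.log n ^ 2 ≤ 1 / (Real.log m * Real.log ((n : ℝ) - (m : ℝ))) := by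
    intro m hm
    rw [Finset.mem_Icc] at hm
    obtain ⟨hm3, hm2⟩ := hm
    have h2m : 2 * m ≤ n := by omega
    have hmR : (3:ℝ) ≤ m := by exact_mod_cast hm3
    have hmn : (m:ℝ) ≤ (n:ℝ) - m := by
      have : (2:ℝ) * m ≤ n := by exact_mod_cast h2m
      linarith
    have hnm3 : (3:ℝ) ≤ (n:ℝ) - m := le_trans hmR hmn
    have hlogm : 1 < Real.log m := by
      have : Real.log 3 ≤ Real.log m := Real.log_le_log (by norm_num) hmR
      linarith
    have hlognm : 1 < Real.log ((n:ℝ) - m) := by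
      have : Real.log 3 ≤ Real.log ((n:ℝ) - m) := Real.log_le_log (by norm_num) hnm3
      linarith
    have hub1 : Real.log m ≤ Real.log n :=
      Real.log_le_log (by linarith) (by exact_mod_cast Nat.le_of_lt_succ (by omega))
    have hub2 : Real.log ((n:ℝ) - m) ≤ Real.log n :=
      Real.log_le_log (by linarith) (by linarith)
    have hpos : 0 < Real.log m * Real.log ((n:ℝ) - m) := by nlinarith
    apply one_div_le_one_div_of_le hpos
    nlinarith
  have hsum : (Finset.Icc 3 (n / 2)).card • (1 / Real.log n ^ 2) ≤
      ∑ m ∈ Finset.Icc 3 (n / 2), 1 / (Real.log m * Real.log ((n : ℝ) - (m : ℝ))) := by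
    rw [← Finset.sum_const]
    exact Finset.sum_le_sum hterm
  have hcard : (Finset.Icc 3 (n / 2)).card = n / 2 - 2 := by
    rw [Nat.card_Icc]; omega
  have hcardR : (n:ℝ) / 8 ≤ ((n / 2 - 2 : ℕ) : ℝ) := by
    have hN : n ≤ 8 * (n / 2 - 2) := by omega
    have : (n:ℝ) ≤ 8 * ((n / 2 - 2 : ℕ) : ℝ) := by exact_mod_cast hN
    linarith
  calc (n:ℝ) / 8 / Real.log n ^ 2
      ≤ ((n / 2 - 2 : ℕ) : ℝ) * (1 / Real.log n ^ 2) := by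
        rw [div_eq_mul_one_div]
        have hinv : 0 ≤ 1 / Real.log n ^ 2 := by positivity
        exact mul_le_mul_of_nonneg_right hcardR hinv
    _ ≤ _ := by
        rw [← hcard, ← nsmul_eq_mul]
        exact hsum
end
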